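/- arXiv:2309.03230 — 5 statements merged into one kernel-verified Lean document; each statement's English description precedes it below -/
import Mathlib

section
/- If q is a smooth solution of the Elastic Beam equation q_t = (q_xx/(1+q_x^2)^{3/2})_x and m = 1 + q_x^2, then the conservation law (√m)_t = ((2 m q_x q_xxx - 6 q_xx^2 q_x^2 - q_xx^2)/(2 m^3))_x holds. -/
open Real

lemma eb_key (g : ℝ → ℝ) (hg : ContDiff ℝ ((⊤ : ℕ∞)) g) (x : ℝ) :
    deriv g x / Real.sqrt (1 + (deriv g x) ^ 2) *
      deriv (deriv (fun z => deriv (deriv g) z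
        / (1 + (deriv g z) ^ 2) ^ ((3 : ℝ) / 2))) x
      = deriv (fun x' =>
            (2 * (1 + (deriv g x') ^ 2) * (deriv g x') * (deriv (deriv (deriv g)) x')
              - 6 * (deriv (deriv g) x') ^ 2 * (deriv g x') ^ 2
              - (deriv (deriv g) x') ^ 2)
            / (2 * (1 + (deriv g x') ^ 2) ^ 3)) x := by
  have h1inf : (1 : WithTop ℕ∞) ≤ (⊤ : ℕ∞) := by exact_mod_cast le_top
  set g1 := deriv g with hg1def
  set g2 := deriv g1 with hg2def
  set g3 := deriv g2 with hg3def
  set g4 := deriv g3 with hg4def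
  have hg1s : ContDiff ℝ ((⊤ : ℕ∞)) g1 := (contDiff_infty_iff_deriv.mp hg).2
  have hg2s : ContDiff ℝ ((⊤ : ℕ∞)) g2 := (contDiff_infty_iff_deriv.mp hg1s).2
  have hg3s : ContDiff ℝ ((⊤ : ℕ∞)) g3 := (contDiff_infty_iff_deriv.mp hg2s).2
  have hd1 : ∀ z, HasDerivAt g1 (g2 z) z := fun z =>
    ((hg1s.differentiable (by simp)) z).hasDerivAt
  have hd2 : ∀ z, HasDerivAt g2 (g3 z) z := fun z =>
    ((hg2s.differentiable (by simp)) z).hasDerivAt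
  have hd3 : ∀ z, HasDerivAt g3 (g4 z) z := fun z =>
    ((hg3s.differentiable (by simp)) z).hasDerivAt
  have hM : ∀ z, (0 : ℝ) < 1 + (g1 z) ^ 2 := fun z => by positivity
  have hMd : ∀ z, HasDerivAt (fun y => 1 + (g1 y) ^ 2) (2 * g1 z * g2 z) z := by
    intro z
    have := ((hd1 z).pow 2).const_add 1
    simpa [pow_one, mul_comm, mul_assoc, mul_left_comm] using this
  -- first derivative of the flux h
  have step1 : ∀ z, HasDerivAt (fun y => g2 y / (1 + (g1 y) ^ 2) ^ ((3 : ℝ) / 2))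
      ((g3 z * (1 + (g1 z) ^ 2) - 3 * g1 z * (g2 z) ^ 2)
        / ((1 + (g1 z) ^ 2) ^ 2 * Real.sqrt (1 + (g1 z) ^ 2))) z := by
    intro z
    have hpow : HasDerivAt (fun y => (1 + (g1 y) ^ 2) ^ ((3 : ℝ) / 2))
        (((3 : ℝ) / 2 * (1 + (g1 z) ^ 2) ^ ((3 : ℝ) / 2 - 1)) * (2 * g1 z * g2 z)) z :=
      ((hMd z).rpow_const (p := (3 : ℝ) / 2) (Or.inl (hM z).ne')).congr_deriv (by ring)
    have hne : (1 + (g1 z) ^ 2) ^ ((3 : ℝ) / 2) ≠ 0 :=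
      (Real.rpow_pos_of_pos (hM z) _).ne'
    have hdiv := (hd2 z).div hpow hne
    refine hdiv.congr_deriv ?_
    have h32 : (1 + (g1 z) ^ 2) ^ ((3 : ℝ) / 2)
        = (1 + (g1 z) ^ 2) * Real.sqrt (1 + (g1 z) ^ 2) := by
      rw [show ((3 : ℝ) / 2) = 1 + 1 / 2 by norm_num, Real.rpow_add (hM z),
        Real.rpow_one, Real.sqrt_eq_rpow]
    have h12 : (1 + (g1 z) ^ 2) ^ ((3 : ℝ) / 2 - 1) = Real.sqrt (1 + (g1 z) ^ 2) := by
      rw [show ((3 : ℝ) / 2 - 1) = 1 / 2 by norm_num, Real.sqrt_eq_rpow]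
    rw [h32, h12]
    have hs0 : Real.sqrt (1 + (g1 z) ^ 2) ≠ 0 := by positivity
    have hM0 : (1 + (g1 z) ^ 2) ≠ 0 := (hM z).ne'
    field_simp
  have step1' : deriv (fun y => g2 y / (1 + (g1 y) ^ 2) ^ ((3 : ℝ) / 2))
      = fun z => (g3 z * (1 + (g1 z) ^ 2) - 3 * g1 z * (g2 z) ^ 2)
        / ((1 + (g1 z) ^ 2) ^ 2 * Real.sqrt (1 + (g1 z) ^ 2)) :=
    funext fun z => (step1 z).deriv
  rw [step1']
  -- second derivative of the flux at x
  have hsq : HasDerivAt (fun y => Real.sqrt (1 + (g1 y) ^ 2))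
      (1 / (2 * Real.sqrt (1 + (g1 x) ^ 2)) * (2 * g1 x * g2 x)) x :=
    (Real.hasDerivAt_sqrt (hM x).ne').comp x (hMd x)
  have hN : HasDerivAt (fun z => g3 z * (1 + (g1 z) ^ 2) - 3 * g1 z * (g2 z) ^ 2)
      ((g4 x * (1 + (g1 x) ^ 2) + g3 x * (2 * g1 x * g2 x))
        - 3 * (g2 x * (g2 x) ^ 2 + g1 x * (2 * g2 x ^ 1 * g3 x))) x := by
    have t1 := (hd3 x).mul (hMd x)
    have t2 := (((hd1 x).mul ((hd2 x).pow 2)).const_mul 3)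
    have := t1.sub t2
    convert this using 1
    all_goals try (funext y)
    all_goals (try rfl)
    all_goals (try simp only [Pi.mul_apply, Pi.sub_apply, Pi.pow_apply, Nat.cast_ofNat, Nat.reduceSub])
    all_goals ring
  have hD : HasDerivAt (fun z => (1 + (g1 z) ^ 2) ^ 2 * Real.sqrt (1 + (g1 z) ^ 2))
      ((2 * (1 + (g1 x) ^ 2) ^ 1 * (2 * g1 x * g2 x)) * Real.sqrt (1 + (g1 x) ^ 2)
        + (1 + (g1 x) ^ 2) ^ 2 * (1 / (2 * Real.sqrt (1 + (g1 x) ^ 2)) * (2 * g1 x * g2 x))) x :=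
    ((hMd x).pow 2).mul hsq
  have hD0 : (1 + (g1 x) ^ 2) ^ 2 * Real.sqrt (1 + (g1 x) ^ 2) ≠ 0 := by positivity
  have hquot := (hN.div hD hD0).deriv
  erw [hquot]
  -- derivative of the right-hand side at x
  have hN2 : HasDerivAt (fun z =>
      2 * (1 + (g1 z) ^ 2) * g1 z * g3 z - 6 * (g2 z) ^ 2 * (g1 z) ^ 2 - (g2 z) ^ 2)
      ((((2 * (2 * g1 x * g2 x)) * g1 x + 2 * (1 + (g1 x) ^ 2) * g2 x) * g3 x
          + 2 * (1 + (g1 x) ^ 2) * g1 x * g4 x)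
        - ((6 * (2 * g2 x ^ 1 * g3 x)) * (g1 x) ^ 2
            + 6 * (g2 x) ^ 2 * (2 * g1 x ^ 1 * g2 x))
        - 2 * g2 x ^ 1 * g3 x) x := by
    have t1 := ((((hMd x).const_mul 2).mul (hd1 x)).mul (hd3 x))
    have t2 := (((hd2 x).pow 2).const_mul 6).mul ((hd1 x).pow 2)
    have t3 := (hd2 x).pow 2
    exact (t1.sub t2).sub t3
  have hD2 : HasDerivAt (fun z => 2 * (1 + (g1 z) ^ 2) ^ 3)
      (2 * (3 * (1 + (g1 x) ^ 2) ^ 2 * (2 * g1 x * g2 x))) x :=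
    ((hMd x).pow 3).const_mul 2
  have hD20 : 2 * (1 + (g1 x) ^ 2) ^ 3 ≠ 0 := by positivity
  erw [(hN2.div hD2 hD20).deriv]
  -- final algebraic identity
  set a := g1 x
  set b := g2 x
  set c := g3 x
  set d := g4 x
  have hA : (0 : ℝ) < 1 + a ^ 2 := by positivity
  set s := Real.sqrt (1 + a ^ 2) with hsdef
  have hs0 : s ≠ 0 := by positivity
  have hs2 : s ^ 2 = 1 + a ^ 2 := Real.sq_sqrt hA.le
  rw [← hs2]
  field_simp
  linear_combination (3*a*b^3 - b*c*s^2) * hs2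


/-- If `q` is a smooth solution of the Elastic Beam equation
`q_t = (q_xx / (1+q_x^2)^{3/2})_x` and `m = 1 + q_x^2`, then the conservation law
`(√m)_t = ((2 m q_x q_xxx - 6 q_xx^2 q_x^2 - q_xx^2)/(2 m^3))_x` holds. -/
theorem stmt_0 (q : ℝ → ℝ → ℝ)
    (hq : ContDiff ℝ (⊤ : ℕ∞) (fun p : ℝ × ℝ => q p.1 p.2))
    (hEB : ∀ x t : ℝ,
      deriv (fun s => q x s) t
        = deriv (fun x' => deriv (deriv (fun z => q z t)) x'
            / (1 + (deriv (fun z => q z t) x') ^ 2) ^ ((3 : ℝ) / 2)) x) :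
    ∀ x t : ℝ,
      deriv (fun s => Real.sqrt (1 + (deriv (fun z => q z s) x) ^ 2)) t
        = deriv (fun x' =>
            (2 * (1 + (deriv (fun z => q z t) x') ^ 2) * (deriv (fun z => q z t) x')
                * (deriv (deriv (deriv (fun z => q z t))) x'
                  )
              - 6 * (deriv (deriv (fun z => q z t)) x') ^ 2
                  * (deriv (fun z => q z t) x') ^ 2
              - (deriv (deriv (fun z => q z t)) x') ^ 2)
            / (2 * (1 + (deriv (fun z => q z t) x') ^ 2) ^ 3)) x := by
  intro x t
  have h1inf : (1 : WithTop ℕ∞) ≤ ((⊤ : ℕ∞) : WithTop ℕ∞) := by exact_mod_cast le_top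
  set F : ℝ × ℝ → ℝ := fun p => q p.1 p.2 with hFdef
  have hFd : Differentiable ℝ F := hq.differentiable (by simp)
  have hDF : ContDiff ℝ ((⊤ : ℕ∞)) (fderiv ℝ F) := hq.fderiv_right (by simp)
  have hDFd : Differentiable ℝ (fderiv ℝ F) := hDF.differentiable (by simp)
  set u : ℝ × ℝ → ℝ := fun p => fderiv ℝ F p (1, 0) with hudef
  set v : ℝ × ℝ → ℝ := fun p => fderiv ℝ F p (0, 1) with hvdef
  have hu_eq : ∀ z s : ℝ, deriv (fun z' => q z' s) z = u (z, s) := by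
    intro z s
    have h1 : HasDerivAt (fun z' : ℝ => ((z' : ℝ), s)) (1, 0) z :=
      (hasDerivAt_id z).prodMk (hasDerivAt_const z s)
    exact ((hFd (z, s)).hasFDerivAt.comp_hasDerivAt z h1).deriv
  have hv_eq : ∀ z s : ℝ, deriv (fun s' => q z s') s = v (z, s) := by
    intro z s
    have h1 : HasDerivAt (fun s' : ℝ => ((z : ℝ), s')) (0, 1) s :=
      (hasDerivAt_const s z).prodMk (hasDerivAt_id s)
    exact ((hFd (z, s)).hasFDerivAt.comp_hasDerivAt s h1).deriv
  have hu_smooth : ContDiff ℝ ((⊤ : ℕ∞)) u := hDF.clm_apply contDiff_const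
  have hv_smooth : ContDiff ℝ ((⊤ : ℕ∞)) v := hDF.clm_apply contDiff_const
  -- derivative of u in the t-direction
  have hut : HasDerivAt (fun s => u (x, s)) (fderiv ℝ u (x, t) (0, 1)) t :=
    ((hu_smooth.differentiable (by simp)) (x, t)).hasFDerivAt.comp_hasDerivAt t
      ((hasDerivAt_const t x).prodMk (hasDerivAt_id t))
  have hvx : HasDerivAt (fun z => v (z, t)) (fderiv ℝ v (x, t) (1, 0)) x :=
    by
      have h1 : HasDerivAt (fun z : ℝ => ((z : ℝ), t)) (1, 0) x :=
        (hasDerivAt_id x).prodMk (hasDerivAt_const x t)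
      exact ((hv_smooth.differentiable (by simp)) (x, t)).hasFDerivAt.comp_hasDerivAt x h1
  -- identify the derivatives of u, v with second derivatives of F
  have hfu : fderiv ℝ u (x, t) (0, 1)
      = fderiv ℝ (fderiv ℝ F) (x, t) (0, 1) (1, 0) := by
    rw [hudef]
    rw [fderiv_clm_apply (hDFd (x, t)) (differentiableAt_const _)]
    simp
  have hfv : fderiv ℝ v (x, t) (1, 0)
      = fderiv ℝ (fderiv ℝ F) (x, t) (1, 0) (0, 1) := by
    rw [hvdef]
    rw [fderiv_clm_apply (hDFd (x, t)) (differentiableAt_const _)]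
    simp
  have hsymm : fderiv ℝ (fderiv ℝ F) (x, t) (0, 1) (1, 0)
      = fderiv ℝ (fderiv ℝ F) (x, t) (1, 0) (0, 1) :=
    (hq.contDiffAt.isSymmSndFDerivAt (by rw [minSmoothness_of_isRCLikeNormedField]; exact WithTop.coe_le_coe.mpr le_top)) _ _
  -- the mixed partial equality
  have hmix : deriv (fun s => u (x, s)) t = deriv (fun z => deriv (fun s' => q z s') t) x := by
    have r1 : deriv (fun z => deriv (fun s' => q z s') t) x = fderiv ℝ v (x, t) (1, 0) := by
      simp only [hv_eq]
      exact hvx.deriv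
    rw [hut.deriv, hfu, hsymm, r1, hfv]
  -- use the PDE
  set g : ℝ → ℝ := fun z => q z t with hgdef
  have hgsm : ContDiff ℝ ((⊤ : ℕ∞)) g := by
    have : ContDiff ℝ ((⊤ : ℕ∞)) (fun z : ℝ => F (z, t)) :=
      (hq.of_le (by simp)).comp (contDiff_id.prodMk contDiff_const)
    exact this
  have hpde : deriv (fun s => u (x, s)) t
      = deriv (deriv (fun x' => deriv (deriv g) x'
          / (1 + (deriv g x') ^ 2) ^ ((3 : ℝ) / 2))) x := by
    rw [hmix]
    have : (fun z => deriv (fun s' => q z s') t)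
        = fun z => deriv (fun x' => deriv (deriv g) x'
            / (1 + (deriv g x') ^ 2) ^ ((3 : ℝ) / 2)) z :=
      funext fun z => hEB z t
    rw [this]
  -- compute the left-hand side
  have hMpos : (0 : ℝ) < 1 + (u (x, t)) ^ 2 := by positivity
  have hinner : HasDerivAt (fun s => 1 + (u (x, s)) ^ 2)
      (2 * u (x, t) ^ 1 * fderiv ℝ u (x, t) (0, 1)) t := (hut.pow 2).const_add 1
  have hsqrt : HasDerivAt (fun s => Real.sqrt (1 + (u (x, s)) ^ 2))
      (1 / (2 * Real.sqrt (1 + (u (x, t)) ^ 2))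
        * (2 * u (x, t) ^ 1 * fderiv ℝ u (x, t) (0, 1))) t :=
    (Real.hasDerivAt_sqrt hMpos.ne').comp t hinner
  have hL : deriv (fun s => Real.sqrt (1 + (deriv (fun z => q z s) x) ^ 2)) t
      = 1 / (2 * Real.sqrt (1 + (u (x, t)) ^ 2))
        * (2 * u (x, t) ^ 1 * fderiv ℝ u (x, t) (0, 1)) := by
    simp only [hu_eq]
    exact hsqrt.deriv
  rw [hL]
  have hux : u (x, t) = deriv g x := (hu_eq x t).symm
  have hkey := eb_key g hgsm x
  rw [← hkey, hux, ← hut.deriv, hpde]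
  have hs0 : Real.sqrt (1 + (deriv g x) ^ 2) ≠ 0 := by positivity
  field_simp
end

section
/- There exists a constant C > 0 such that for all t > 0, λ_0 > 0, and y ≥ 0, the integral ∫_0^∞ exp(-48 t λ_0 v^2) / √|y - v| dv ≤ C (tλ_0)^{-1/4}. -/
open MeasureTheory

/-- There is `C > 0` such that for all `t > 0`, `l₀ > 0`, `y ≥ 0`,
`∫_0^∞ e^{-48 t l₀ v²} / √|y - v| dv ≤ C (tl₀)^{-1/4}`. -/
theorem stmt_6 :
    ∃ C : ℝ, 0 < C ∧ ∀ t l₀ y : ℝ, 0 < t → 0 < l₀ → 0 ≤ y →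
      (∫ v in Set.Ioi (0 : ℝ), Real.exp (-48 * t * l₀ * v ^ 2) / Real.sqrt |y - v|)
        ≤ C * (t * l₀) ^ (-(1 : ℝ) / 4) := by
  refine ⟨5, by norm_num, ?_⟩
  intro t l₀ y ht hl hy
  set a : ℝ := t * l₀ with ha_def
  have ha : 0 < a := mul_pos ht hl
  set p : ℝ := -(1 : ℝ) / 2 with hp_def
  set r : ℝ := a ^ ((1 : ℝ) / 4) with hr_def
  have hr : 0 < r := Real.rpow_pos_of_pos ha _
  set δ : ℝ := a ^ (-(1 : ℝ) / 2) with hδ_def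
  have hδ : 0 < δ := Real.rpow_pos_of_pos ha _
  have hsqrtδ : Real.sqrt δ = r⁻¹ := by
    rw [hδ_def, Real.sqrt_eq_rpow, ← Real.rpow_mul ha.le, hr_def, ← Real.rpow_neg ha.le]
    norm_num
  -- the even singular kernel
  set φ : ℝ → ℝ := fun u => |u| ^ p with hφ_def
  have hφ_eq : ∀ u : ℝ, φ u = u ^ p + (-u) ^ p := by
    intro u
    show |u| ^ p = u ^ p + (-u) ^ p
    have hcos : Real.cos (p * Real.pi) = 0 := by
      have : p * Real.pi = -(Real.pi / 2) := by rw [hp_def]; ring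
      rw [this, Real.cos_neg, Real.cos_pi_div_two]
    rcases lt_trichotomy u 0 with h | h | h
    · rw [abs_of_neg h, Real.rpow_def_of_neg h, hcos, mul_zero, zero_add]
    · simp [h, Real.zero_rpow (by norm_num [hp_def] : p ≠ 0)]
    · rw [abs_of_pos h, Real.rpow_def_of_neg (by linarith : -u < 0), hcos, mul_zero,
        add_zero]
  have hφ_nonneg : ∀ u : ℝ, 0 ≤ φ u := fun u => Real.rpow_nonneg (abs_nonneg u) p
  set F : ℝ → ℝ := fun v => φ (v - y) with hF_def
  have hF_eq : ∀ v : ℝ, F v = (Real.sqrt |y - v|)⁻¹ := by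
    intro v
    show |v - y| ^ p = (Real.sqrt |y - v|)⁻¹
    rw [abs_sub_comm v y, Real.sqrt_eq_rpow, ← Real.rpow_neg (abs_nonneg _), hp_def]
    norm_num
  set S : Set ℝ := Set.Ioc (y - δ) (y + δ) with hS_def
  set g : ℝ → ℝ := S.indicator F with hg_def
  set h : ℝ → ℝ := fun v => r * Real.exp (-(48 * a) * v ^ 2) with hh_def
  have hh_nonneg : ∀ v : ℝ, 0 ≤ h v := fun v =>
    mul_nonneg hr.le (Real.exp_nonneg _)
  have hE : ∀ v : ℝ, Real.exp (-48 * t * l₀ * v ^ 2) = Real.exp (-(48 * a) * v ^ 2) := by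
    intro v; congr 1; rw [ha_def]; ring
  -- pointwise bound
  have hpt : ∀ v : ℝ, Real.exp (-48 * t * l₀ * v ^ 2) / Real.sqrt |y - v| ≤ g v + h v := by
    intro v
    have hexp1 : Real.exp (-48 * t * l₀ * v ^ 2) ≤ 1 := by
      rw [Real.exp_le_one_iff]
      nlinarith [sq_nonneg v, mul_pos ht hl]
    by_cases hv : v ∈ S
    · have hgv : g v = F v := Set.indicator_of_mem hv F
      have h1 : Real.exp (-48 * t * l₀ * v ^ 2) / Real.sqrt |y - v| ≤ F v := by
        rw [hF_eq v]
        rcases eq_or_lt_of_le (Real.sqrt_nonneg |y - v|) with h0 | h0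
        · simp [← h0]
        · rw [inv_eq_one_div]
          exact (div_le_div_iff_of_pos_right h0).mpr hexp1
      have := hh_nonneg v
      rw [hgv] at *
      linarith
    · have hgv : g v = 0 := Set.indicator_of_notMem hv F
      have habs : δ ≤ |y - v| := by
        simp only [hS_def, Set.mem_Ioc, not_and_or, not_lt, not_le] at hv
        rcases hv with h1 | h1
        · rw [abs_of_nonneg (by linarith)]; linarith
        · rw [abs_sub_comm, abs_of_nonneg (by linarith)]; linarith
      have hs : r⁻¹ ≤ Real.sqrt |y - v| := by
        rw [← hsqrtδ]; exact Real.sqrt_le_sqrt habs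
      have hs0 : (0 : ℝ) < Real.sqrt |y - v| := lt_of_lt_of_le (inv_pos.mpr hr) hs
      rw [hgv, zero_add, hE v, div_le_iff₀ hs0]
      have h3 : (1 : ℝ) ≤ r * Real.sqrt |y - v| := by
        calc (1 : ℝ) = r * r⁻¹ := (mul_inv_cancel₀ hr.ne').symm
        _ ≤ r * Real.sqrt |y - v| := mul_le_mul_of_nonneg_left hs hr.le
      calc Real.exp (-(48 * a) * v ^ 2) = Real.exp (-(48 * a) * v ^ 2) * 1 := (mul_one _).symm
        _ ≤ Real.exp (-(48 * a) * v ^ 2) * (r * Real.sqrt |y - v|) :=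
            mul_le_mul_of_nonneg_left h3 (Real.exp_nonneg _)
        _ = r * Real.exp (-(48 * a) * v ^ 2) * Real.sqrt |y - v| := by ring
  -- integrability of pieces
  have hp1 : (-1 : ℝ) < p := by rw [hp_def]; norm_num
  have hII_a : IntervalIntegrable (fun u : ℝ => u ^ p) volume (-δ) δ :=
    intervalIntegral.intervalIntegrable_rpow' hp1
  have hII_b : IntervalIntegrable (fun u : ℝ => (-u) ^ p) volume (-δ) δ := by
    have h0 : IntervalIntegrable (fun u : ℝ => u ^ p) volume δ (-δ) :=
      intervalIntegral.intervalIntegrable_rpow' hp1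
    simpa using (IntervalIntegrable.iff_comp_neg (by simp)).mp h0
  have hII_φ : IntervalIntegrable φ volume (-δ) δ := by
    have : φ = fun u => u ^ p + (-u) ^ p := funext hφ_eq
    rw [this]; exact hII_a.add hII_b
  have hII_F : IntervalIntegrable F volume (y - δ) (y + δ) := by
    have := hII_φ.comp_sub_right y
    have he1 : -δ + y = y - δ := by ring
    have he2 : δ + y = y + δ := by ring
    rw [he1, he2] at this
    exact this
  have hF_S : IntegrableOn F S volume := hII_F.1
  have hg_int : Integrable g volume := hF_S.integrable_indicator measurableSet_Ioc
  have hh_int : Integrable h volume :=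
    (integrable_exp_neg_mul_sq (by positivity : (0 : ℝ) < 48 * a)).const_mul r
  have hf_meas : AEStronglyMeasurable
      (fun v => Real.exp (-48 * t * l₀ * v ^ 2) / Real.sqrt |y - v|)
      (volume.restrict (Set.Ioi (0 : ℝ))) := by
    apply Measurable.aestronglyMeasurable
    fun_prop
  have hf_int : IntegrableOn
      (fun v => Real.exp (-48 * t * l₀ * v ^ 2) / Real.sqrt |y - v|)
      (Set.Ioi (0 : ℝ)) volume := by
    apply Integrable.mono' ((hg_int.add hh_int).integrableOn) hf_meas
    filter_upwards with v
    rw [Real.norm_eq_abs, abs_of_nonneg (div_nonneg (Real.exp_nonneg _) (Real.sqrt_nonneg _))]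
    exact hpt v
  -- value of the singular integral
  have hrpow_neg : (-δ) ^ (p + 1) = 0 := by
    rw [Real.rpow_def_of_neg (by linarith : -δ < 0)]
    have : (p + 1) * Real.pi = Real.pi / 2 := by rw [hp_def]; ring
    rw [this, Real.cos_pi_div_two, mul_zero]
  have hint_a : (∫ u in (-δ)..δ, u ^ p) = 2 * Real.sqrt δ := by
    rw [integral_rpow (Or.inl hp1), hrpow_neg, Real.sqrt_eq_rpow]
    rw [show p + 1 = (1 : ℝ) / 2 by rw [hp_def]; ring]
    ring
  have hint_φ : (∫ u in (-δ)..δ, φ u) = 4 * Real.sqrt δ := by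
    have h1 : (∫ u in (-δ)..δ, φ u) = (∫ u in (-δ)..δ, u ^ p) + ∫ u in (-δ)..δ, (-u) ^ p := by
      rw [← intervalIntegral.integral_add hII_a hII_b]
      exact intervalIntegral.integral_congr fun u _ => hφ_eq u
    have h2 : (∫ u in (-δ)..δ, (-u) ^ p) = ∫ u in (-δ)..δ, u ^ p := by
      have := intervalIntegral.integral_comp_neg (a := -δ) (b := δ) (fun u : ℝ => u ^ p)
      simpa using this
    rw [h1, h2, hint_a]; ring
  have hint_F : (∫ v in S, F v) = 4 * Real.sqrt δ := by
    rw [hS_def, ← intervalIntegral.integral_of_le (by linarith : y - δ ≤ y + δ)]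
    have hcomp := intervalIntegral.integral_comp_sub_right (a := y - δ) (b := y + δ) φ y
    have he1 : y - δ - y = -δ := by ring
    have he2 : y + δ - y = δ := by ring
    rw [he1, he2] at hcomp
    rw [hF_def]
    rw [hcomp, hint_φ]
  -- integral of g over Ioi 0
  have hg_le : (∫ v in Set.Ioi (0 : ℝ), g v) ≤ 4 * r⁻¹ := by
    have h1 : (∫ v in Set.Ioi (0 : ℝ), g v) ≤ ∫ v, g v :=
      setIntegral_le_integral hg_int
        (Filter.Eventually.of_forall fun v => Set.indicator_nonneg (fun u _ => hφ_nonneg _) v)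
    have h2 : (∫ v, g v) = ∫ v in S, F v := integral_indicator measurableSet_Ioc
    rw [h2, hint_F, hsqrtδ] at h1
    exact h1
  -- integral of h over Ioi 0
  have hh_le : (∫ v in Set.Ioi (0 : ℝ), h v) ≤ r⁻¹ := by
    have h1 : (∫ v in Set.Ioi (0 : ℝ), h v)
        = r * ∫ v in Set.Ioi (0 : ℝ), Real.exp (-(48 * a) * v ^ 2) := by
      rw [hh_def, integral_const_mul]
    rw [h1, integral_gaussian_Ioi (48 * a)]
    have hsa : Real.sqrt a = r * r := by
      rw [hr_def, ← Real.rpow_add ha, Real.sqrt_eq_rpow]; norm_num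
    have h2 : Real.sqrt (Real.pi / (48 * a)) ≤ (Real.sqrt a)⁻¹ := by
      rw [← Real.sqrt_inv]
      apply Real.sqrt_le_sqrt
      rw [inv_eq_one_div, div_le_div_iff₀ (by positivity : (0 : ℝ) < 48 * a) ha]
      nlinarith [mul_le_mul_of_nonneg_right Real.pi_le_four ha.le]
    calc r * (Real.sqrt (Real.pi / (48 * a)) / 2) ≤ r * (Real.sqrt a)⁻¹ := by
          apply mul_le_mul_of_nonneg_left _ hr.le
          have := Real.sqrt_nonneg (Real.pi / (48 * a))
          linarith
      _ = r⁻¹ := by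
          rw [hsa, mul_inv, ← mul_assoc, mul_inv_cancel₀ hr.ne', one_mul]
  -- combine
  have hsplit : (∫ v in Set.Ioi (0 : ℝ), Real.exp (-48 * t * l₀ * v ^ 2) / Real.sqrt |y - v|)
      ≤ ∫ v in Set.Ioi (0 : ℝ), (g v + h v) :=
    setIntegral_mono_on hf_int ((hg_int.add hh_int).integrableOn) measurableSet_Ioi
      (fun v _ => hpt v)
  have hadd : (∫ v in Set.Ioi (0 : ℝ), (g v + h v))
      = (∫ v in Set.Ioi (0 : ℝ), g v) + ∫ v in Set.Ioi (0 : ℝ), h v :=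
    integral_add hg_int.integrableOn hh_int.integrableOn
  have hRHS : a ^ (-(1 : ℝ) / 4) = r⁻¹ := by
    rw [show (-(1 : ℝ) / 4) = -((1 : ℝ) / 4) by ring, Real.rpow_neg ha.le, hr_def]
  rw [hRHS]
  rw [hadd] at hsplit
  linarith
end

section
/- For p, q > 1 with 1/p + 1/q = 1 and 2 < q < 4, there is a constant C (depending only on p) such that ∫_0^∞ e^{-48 t λ_0 v^2} v^{1/p - 1/2} |v - y|^{1/q - 1} dv ≤ C (t λ_0)^{-1/4} for all y ≥ 0, t > 0, λ_0 > 0. -/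
open MeasureTheory Real Set

set_option maxHeartbeats 1000000


private lemma aux_sup {c y : ℝ} (hc : 0 < c) (hy : 0 ≤ y) :
    y ^ ((1:ℝ)/2) * Real.exp (-(4/9) * c * y ^ 2) ≤ (9/4) * c ^ (-(1:ℝ)/4) := by
  have hcpow : (0:ℝ) < c ^ (-(1:ℝ)/4) := rpow_pos_of_pos hc _
  rcases le_or_gt (c * y ^ 2) 1 with h | h
  · have hy2 : y ^ 2 ≤ c⁻¹ := by
      rw [inv_eq_one_div, le_div_iff₀ hc]; nlinarith
    have h1 : y ^ ((1:ℝ)/2) ≤ c ^ (-(1:ℝ)/4) := by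
      have e1 : y ^ ((1:ℝ)/2) = (y ^ 2) ^ ((1:ℝ)/4) := by
        rw [← rpow_two, ← Real.rpow_mul hy]; norm_num
      have e2 : (y ^ 2 : ℝ) ^ ((1:ℝ)/4) ≤ (c⁻¹) ^ ((1:ℝ)/4) :=
        rpow_le_rpow (sq_nonneg y) hy2 (by norm_num)
      have e3 : (c⁻¹ : ℝ) ^ ((1:ℝ)/4) = c ^ (-(1:ℝ)/4) := by
        rw [← rpow_neg_one c, ← Real.rpow_mul hc.le]; norm_num
      rw [e1, ← e3]; exact e2
    have h2 : Real.exp (-(4/9) * c * y ^ 2) ≤ 1 := by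
      rw [show (1:ℝ) = Real.exp 0 by simp]
      apply Real.exp_le_exp.mpr; nlinarith
    calc y ^ ((1:ℝ)/2) * Real.exp (-(4/9) * c * y ^ 2)
        ≤ c ^ (-(1:ℝ)/4) * 1 :=
          mul_le_mul h1 h2 (Real.exp_pos _).le hcpow.le
      _ ≤ (9/4) * c ^ (-(1:ℝ)/4) := by linarith
  · have hy0 : 0 < y := by
      rcases hy.lt_or_eq with h' | h'
      · exact h'
      · exfalso; rw [← h'] at h; norm_num at h
    have hcy : (0:ℝ) < c * y ^ 2 := by positivity
    have hexp : Real.exp (-(4/9) * c * y ^ 2) ≤ ((4/9) * (c * y ^ 2))⁻¹ := by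
      have e1 : (4/9) * (c * y ^ 2) ≤ Real.exp ((4/9) * (c * y ^ 2)) := by
        nlinarith [Real.add_one_le_exp ((4/9) * (c * y ^ 2))]
      have e2 : Real.exp (-(4/9) * c * y ^ 2) = (Real.exp ((4/9) * (c * y ^ 2)))⁻¹ := by
        rw [← Real.exp_neg]; ring_nf
      rw [e2]
      exact inv_anti₀ (by positivity) e1
    have key : y ^ ((1:ℝ)/2) ≤ c ^ (-(1:ℝ)/4) * (c * y ^ 2) := by
      have k1 : (1:ℝ) ≤ (c * y ^ 2) ^ ((3:ℝ)/4) := by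
        calc (1:ℝ) = 1 ^ ((3:ℝ)/4) := (one_rpow _).symm
          _ ≤ (c * y ^ 2) ^ ((3:ℝ)/4) := rpow_le_rpow zero_le_one h.le (by norm_num)
      have k2 : (c * y ^ 2) ^ ((3:ℝ)/4) = c ^ ((3:ℝ)/4) * y ^ ((3:ℝ)/2) := by
        rw [Real.mul_rpow hc.le (sq_nonneg y), ← rpow_two, ← Real.rpow_mul hy]
        norm_num
      have k3 : y ^ ((1:ℝ)/2) * y ^ ((3:ℝ)/2) = y ^ 2 := by
        rw [← Real.rpow_add hy0, ← rpow_two]; norm_num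
      have k4 : c ^ (-(1:ℝ)/4) * c = c ^ ((3:ℝ)/4) := by
        nth_rewrite 2 [← Real.rpow_one c]
        rw [← Real.rpow_add hc]; norm_num
      have k5 : y ^ ((1:ℝ)/2) ≤ y ^ ((1:ℝ)/2) * (c ^ ((3:ℝ)/4) * y ^ ((3:ℝ)/2)) := by
        nth_rewrite 1 [← mul_one (y ^ ((1:ℝ)/2))]
        apply mul_le_mul_of_nonneg_left _ (rpow_nonneg hy _)
        rw [← k2]; exact k1
      calc y ^ ((1:ℝ)/2) ≤ y ^ ((1:ℝ)/2) * (c ^ ((3:ℝ)/4) * y ^ ((3:ℝ)/2)) := k5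
        _ = c ^ ((3:ℝ)/4) * (y ^ ((1:ℝ)/2) * y ^ ((3:ℝ)/2)) := by ring
        _ = c ^ ((3:ℝ)/4) * y ^ 2 := by rw [k3]
        _ = c ^ (-(1:ℝ)/4) * (c * y ^ 2) := by rw [← k4]; ring
    calc y ^ ((1:ℝ)/2) * Real.exp (-(4/9) * c * y ^ 2)
        ≤ (c ^ (-(1:ℝ)/4) * (c * y ^ 2)) * ((4/9) * (c * y ^ 2))⁻¹ :=
          mul_le_mul key hexp (Real.exp_pos _).le (by positivity)
      _ = (9/4) * c ^ (-(1:ℝ)/4) := by field_simp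


/-- For conjugate exponents `p, q` with `2 < q < 4`, there is a constant `C`
(depending only on `p`) such that
`∫_0^∞ e^{-48 t l₀ v²} v^{1/p - 1/2} |v - y|^{1/q - 1} dv ≤ C (t l₀)^{-1/4}`
uniformly in `y ≥ 0`, `t > 0`, `l₀ > 0`. -/
theorem stmt_8 (p q : ℝ) (hp : 1 < p) (hpq : 1 / p + 1 / q = 1)
    (hq2 : 2 < q) (hq4 : q < 4) :
    ∃ C : ℝ, 0 < C ∧ ∀ y t l₀ : ℝ, 0 ≤ y → 0 < t → 0 < l₀ →
      (∫ v in Set.Ioi (0 : ℝ),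
          Real.exp (-48 * t * l₀ * v ^ 2) * v ^ (1 / p - 1 / 2)
            * |v - y| ^ (1 / q - 1))
        ≤ C * (t * l₀) ^ (-(1 : ℝ) / 4) := by
  have hp0 : 0 < p := lt_trans one_pos hp
  have hq0 : 0 < q := by linarith
  have hq12 : 1 / q < 1 / 2 := by rw [div_lt_div_iff₀ hq0 two_pos]; linarith
  have hq14 : (1:ℝ) / 4 < 1 / q := by rw [div_lt_div_iff₀ (by norm_num) hq0]; linarith
  set A : ℝ := 1 / p - 1 / 2 with hA_def
  set B : ℝ := 1 / q - 1 with hB_def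
  have hA : 0 < A := by rw [hA_def]; linarith
  have hA1 : A ≤ 1 := by
    have : 1 / p < 1 := by rw [div_lt_one hp0]; exact hp
    rw [hA_def]; linarith
  have hB : -1 < B := by rw [hB_def]; linarith
  have hB0 : B < 0 := by rw [hB_def]; linarith
  have hB1 : -B ≤ 1 := by rw [hB_def]; linarith
  have hB1' : 0 < B + 1 := by rw [hB_def]; linarith
  have hAB : A + B = -(1:ℝ)/2 := by rw [hA_def, hB_def]; linarith
  have hG : 0 < Real.Gamma (1/4) := Real.Gamma_pos_of_pos (by norm_num)
  refine ⟨(Real.Gamma (1/4) + 2 ^ (A+1) / (B+1) * (9/4)) * (48:ℝ) ^ (-(1:ℝ)/4), by positivity,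
    fun y t l₀ hy ht hl => ?_⟩
  have hc : (0:ℝ) < 48 * t * l₀ := by positivity
  set c : ℝ := 48 * t * l₀ with hc_def
  -- the two dominating functions
  set f₁ : ℝ → ℝ := fun v => 2 * (v ^ (-(1:ℝ)/2) * Real.exp (-c * v ^ 2)) with hf₁_def
  set S : Set ℝ := Icc (2*y/3) (2*y) with hS_def
  set K : ℝ := Real.exp (-(4/9) * c * y ^ 2) * (2*y) ^ A with hK_def
  set f₂ : ℝ → ℝ := S.indicator (fun v => K * |v - y| ^ B) with hf₂_def
  have hK0 : 0 ≤ K := by positivity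
  have hab : 2*y/3 ≤ y := by linarith
  have hbc : y ≤ 2*y := by linarith
  -- integrability of f₁
  have hf₁i : IntegrableOn f₁ (Ioi (0:ℝ)) := by
    exact (integrableOn_rpow_mul_exp_neg_mul_sq hc (by norm_num : (-1:ℝ) < -1/2)).const_mul 2
  -- interval integrability pieces
  have hi1 : IntervalIntegrable (fun v => |v - y| ^ B) volume (2*y/3) y := by
    have h0 : IntervalIntegrable (fun x : ℝ => x ^ B) volume 0 (y/3) :=
      intervalIntegral.intervalIntegrable_rpow' hB
    have h1 := (h0.comp_sub_left y).symm
    rw [sub_zero, show y - y/3 = 2*y/3 by ring] at h1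
    rw [intervalIntegrable_iff_integrableOn_Ioc_of_le hab] at h1 ⊢
    refine h1.congr_fun (fun v hv => ?_) measurableSet_Ioc
    have : v ≤ y := hv.2
    rw [abs_of_nonpos (by linarith), neg_sub]
  have hi2 : IntervalIntegrable (fun v => |v - y| ^ B) volume y (2*y) := by
    have h0 : IntervalIntegrable (fun x : ℝ => x ^ B) volume 0 y :=
      intervalIntegral.intervalIntegrable_rpow' hB
    have h1 := h0.comp_sub_right y
    rw [zero_add, show y + y = 2*y by ring] at h1
    rw [intervalIntegrable_iff_integrableOn_Ioc_of_le hbc] at h1 ⊢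
    refine h1.congr_fun (fun v hv => ?_) measurableSet_Ioc
    have : y ≤ v := hv.1.le
    rw [abs_of_nonneg (by linarith)]
  have hiJ : IntervalIntegrable (fun v => |v - y| ^ B) volume (2*y/3) (2*y) := hi1.trans hi2
  have hf₂S : IntegrableOn (fun v => |v - y| ^ B) S := by
    rw [hS_def, integrableOn_Icc_iff_integrableOn_Ioc]
    exact (intervalIntegrable_iff_integrableOn_Ioc_of_le (hab.trans hbc)).mp hiJ
  have hf₂full : Integrable f₂ := by
    rw [hf₂_def, integrable_indicator_iff measurableSet_Icc]
    exact hf₂S.const_mul K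
  have hf₂i : IntegrableOn f₂ (Ioi (0:ℝ)) := hf₂full.integrableOn
  -- pointwise bound
  have hpt : ∀ v ∈ Ioi (0:ℝ),
      Real.exp (-48 * t * l₀ * v ^ 2) * v ^ A * |v - y| ^ B ≤ f₁ v + f₂ v := by
    intro v hv
    rw [mem_Ioi] at hv
    have hexp_eq : Real.exp (-48 * t * l₀ * v ^ 2) = Real.exp (-c * v ^ 2) := by
      rw [hc_def]; ring_nf
    by_cases hcase : |v - y| ≤ v/2
    · have habs := abs_le.mp hcase
      have hv2y : v ≤ 2*y := by cases habs with | intro h1 h2 => linarith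
      have h2y3 : 2*y/3 ≤ v := by cases habs with | intro h1 h2 => linarith
      have hmem : v ∈ S := ⟨h2y3, hv2y⟩
      have hf₂v : f₂ v = K * |v - y| ^ B := by
        rw [hf₂_def]; exact Set.indicator_of_mem hmem _
      have hf₁v : 0 ≤ f₁ v := by
        rw [hf₁_def]; positivity
      have hee : Real.exp (-c * v ^ 2) ≤ Real.exp (-(4/9) * c * y ^ 2) := by
        apply Real.exp_le_exp.mpr
        have hsq : (2*y/3)^2 ≤ v^2 := by nlinarith
        nlinarith
      have hvA : v ^ A ≤ (2*y) ^ A := rpow_le_rpow hv.le hv2y hA.le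
      have hrB : (0:ℝ) ≤ |v - y| ^ B := rpow_nonneg (abs_nonneg _) _
      have : Real.exp (-48 * t * l₀ * v ^ 2) * v ^ A * |v - y| ^ B ≤ K * |v - y| ^ B := by
        rw [hexp_eq, hK_def]
        apply mul_le_mul_of_nonneg_right _ hrB
        exact mul_le_mul hee hvA (rpow_nonneg hv.le _) (Real.exp_pos _).le
      rw [hf₂v]; linarith
    · push_neg at hcase
      have hf₂v : 0 ≤ f₂ v := by
        rw [hf₂_def]
        exact Set.indicator_nonneg (fun w _ => by positivity) v
      have h1 : |v - y| ^ B ≤ (v/2) ^ B :=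
        rpow_le_rpow_of_nonpos (by positivity) hcase.le hB0.le
      have h2 : v ^ A * (v/2) ^ B = 2 ^ (-B) * v ^ (-(1:ℝ)/2) := by
        rw [div_eq_mul_inv, Real.mul_rpow hv.le (by norm_num),
          Real.inv_rpow (by norm_num : (0:ℝ) ≤ 2), ← Real.rpow_neg (by norm_num : (0:ℝ) ≤ 2),
          ← mul_assoc, ← Real.rpow_add hv, hAB]
        ring
      have h3 : (2:ℝ) ^ (-B) ≤ 2 := by
        calc (2:ℝ) ^ (-B) ≤ 2 ^ (1:ℝ) := rpow_le_rpow_of_exponent_le one_le_two hB1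
          _ = 2 := Real.rpow_one 2
      have h4 : Real.exp (-48 * t * l₀ * v ^ 2) * v ^ A * |v - y| ^ B ≤ f₁ v := by
        calc Real.exp (-48 * t * l₀ * v ^ 2) * v ^ A * |v - y| ^ B
            ≤ Real.exp (-48 * t * l₀ * v ^ 2) * v ^ A * (v/2) ^ B := by
              apply mul_le_mul_of_nonneg_left h1 (by positivity)
          _ = Real.exp (-c * v ^ 2) * (2 ^ (-B) * v ^ (-(1:ℝ)/2)) := by
              rw [hexp_eq, mul_assoc, h2]
          _ ≤ Real.exp (-c * v ^ 2) * (2 * v ^ (-(1:ℝ)/2)) := by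
              apply mul_le_mul_of_nonneg_left _ (Real.exp_pos _).le
              apply mul_le_mul_of_nonneg_right h3 (rpow_nonneg hv.le _)
          _ = f₁ v := by rw [hf₁_def]; ring
      linarith
  -- integral of f₁
  have hI₁ : ∫ v in Ioi (0:ℝ), f₁ v = Real.Gamma (1/4) * c ^ (-(1:ℝ)/4) := by
    rw [hf₁_def, MeasureTheory.integral_const_mul]
    have : ∫ v in Ioi (0:ℝ), v ^ (-(1:ℝ)/2) * Real.exp (-c * v ^ 2)
        = c ^ (-(-(1:ℝ)/2 + 1)/2) * (1/2) * Real.Gamma ((-(1:ℝ)/2 + 1)/2) := by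
      rw [show (∫ v in Ioi (0:ℝ), v ^ (-(1:ℝ)/2) * Real.exp (-c * v ^ 2))
          = ∫ v in Ioi (0:ℝ), v ^ (-(1:ℝ)/2) * Real.exp (-c * v ^ (2:ℝ)) by
        refine setIntegral_congr_fun measurableSet_Ioi (fun v hv => ?_)
        rw [Real.rpow_two]]
      exact integral_rpow_mul_exp_neg_mul_rpow two_pos (by norm_num) hc
    rw [this]
    norm_num
    ring
  -- integral of f₂
  have hI₂ : ∫ v in Ioi (0:ℝ), f₂ v ≤ 2 ^ (A+1) / (B+1) * (9/4) * c ^ (-(1:ℝ)/4) := by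
    have s1 : ∫ v in Ioi (0:ℝ), f₂ v ≤ ∫ v, f₂ v := by
      apply setIntegral_le_integral hf₂full
      filter_upwards with v
      rw [hf₂_def]
      exact Set.indicator_nonneg (fun w _ => by positivity) v
    have s2 : ∫ v, f₂ v = K * ∫ v in S, |v - y| ^ B := by
      rw [hf₂_def, MeasureTheory.integral_indicator measurableSet_Icc,
        MeasureTheory.integral_const_mul]
    have s4 : ∫ v in S, |v - y| ^ B = ∫ v in (2*y/3)..(2*y), |v - y| ^ B := by
      rw [hS_def, MeasureTheory.integral_Icc_eq_integral_Ioc,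
        intervalIntegral.integral_of_le (hab.trans hbc)]
    have s6 : ∫ v in (2*y/3)..y, |v - y| ^ B ≤ y ^ (B+1) / (B+1) := by
      have e1 : ∫ v in (2*y/3)..y, |v - y| ^ B = ∫ v in (2*y/3)..y, (y - v) ^ B := by
        apply intervalIntegral.integral_congr
        intro v hv
        rw [uIcc_of_le hab] at hv
        simp only
        rw [abs_of_nonpos (by linarith [hv.2]), neg_sub]
      have e2 : ∫ v in (2*y/3)..y, (y - v) ^ B = ∫ x in (0:ℝ)..(y/3), x ^ B := by
        rw [intervalIntegral.integral_comp_sub_left (fun x : ℝ => x ^ B) y, sub_self,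
          show y - 2*y/3 = y/3 by ring]
      have e3 : ∫ x in (0:ℝ)..(y/3), x ^ B = (y/3) ^ (B+1) / (B+1) := by
        rw [integral_rpow (Or.inl hB), Real.zero_rpow (by linarith)]
        ring
      rw [e1, e2, e3]
      exact (div_le_div_iff_of_pos_right hB1').mpr
        (rpow_le_rpow (by positivity) (by linarith) hB1'.le)
    have s7 : ∫ v in y..(2*y), |v - y| ^ B ≤ y ^ (B+1) / (B+1) := by
      have e1 : ∫ v in y..(2*y), |v - y| ^ B = ∫ v in y..(2*y), (v - y) ^ B := by
        apply intervalIntegral.integral_congr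
        intro v hv
        rw [uIcc_of_le hbc] at hv
        simp only
        rw [abs_of_nonneg (by linarith [hv.1])]
      have e2 : ∫ v in y..(2*y), (v - y) ^ B = ∫ x in (0:ℝ)..y, x ^ B := by
        rw [intervalIntegral.integral_comp_sub_right (fun x : ℝ => x ^ B) y, sub_self,
          show 2*y - y = y by ring]
      have e3 : ∫ x in (0:ℝ)..y, x ^ B = y ^ (B+1) / (B+1) := by
        rw [integral_rpow (Or.inl hB), Real.zero_rpow (by linarith)]
        ring
      rw [e1, e2, e3]
    have s5 : ∫ v in (2*y/3)..(2*y), |v - y| ^ B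
        = (∫ v in (2*y/3)..y, |v - y| ^ B) + ∫ v in y..(2*y), |v - y| ^ B :=
      (intervalIntegral.integral_add_adjacent_intervals hi1 hi2).symm
    have s8 : K * (∫ v in S, |v - y| ^ B) ≤ K * (2 * y ^ (B+1) / (B+1)) := by
      apply mul_le_mul_of_nonneg_left _ hK0
      rw [s4, s5]
      calc (∫ v in (2*y/3)..y, |v - y| ^ B) + ∫ v in y..(2*y), |v - y| ^ B
          ≤ y ^ (B+1) / (B+1) + y ^ (B+1) / (B+1) := add_le_add s6 s7
        _ = 2 * y ^ (B+1) / (B+1) := by ring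
    have s9 : K * (2 * y ^ (B+1) / (B+1))
        = (2 ^ A * 2 / (B+1)) * (y ^ ((1:ℝ)/2) * Real.exp (-(4/9) * c * y ^ 2)) := by
      rw [hK_def, Real.mul_rpow (by norm_num : (0:ℝ) ≤ 2) hy]
      have : y ^ ((1:ℝ)/2) = y ^ A * y ^ (B+1) := by
        rw [← Real.rpow_add' hy (by rw [show A + (B+1) = (1:ℝ)/2 by linarith]; norm_num)]
        congr 1
        linarith
      rw [this]
      ring
    have s10 : (2 ^ A * 2 / (B+1)) * (y ^ ((1:ℝ)/2) * Real.exp (-(4/9) * c * y ^ 2))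
        ≤ (2 ^ A * 2 / (B+1)) * ((9/4) * c ^ (-(1:ℝ)/4)) := by
      apply mul_le_mul_of_nonneg_left (aux_sup hc hy) (by positivity)
    have s11 : (2 ^ A * 2 / (B+1)) * ((9/4) * c ^ (-(1:ℝ)/4))
        = 2 ^ (A+1) / (B+1) * (9/4) * c ^ (-(1:ℝ)/4) := by
      rw [Real.rpow_add two_pos A 1, Real.rpow_one]
      ring
    calc ∫ v in Ioi (0:ℝ), f₂ v ≤ ∫ v, f₂ v := s1
      _ = K * ∫ v in S, |v - y| ^ B := s2
      _ ≤ K * (2 * y ^ (B+1) / (B+1)) := s8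
      _ = (2 ^ A * 2 / (B+1)) * (y ^ ((1:ℝ)/2) * Real.exp (-(4/9) * c * y ^ 2)) := s9
      _ ≤ (2 ^ A * 2 / (B+1)) * ((9/4) * c ^ (-(1:ℝ)/4)) := s10
      _ = 2 ^ (A+1) / (B+1) * (9/4) * c ^ (-(1:ℝ)/4) := s11
  -- assembly
  have hmono : (∫ v in Ioi (0:ℝ),
        Real.exp (-48 * t * l₀ * v ^ 2) * v ^ A * |v - y| ^ B)
      ≤ ∫ v in Ioi (0:ℝ), (f₁ v + f₂ v) := by
    apply integral_mono_of_nonneg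
    · filter_upwards [ae_restrict_mem measurableSet_Ioi] with v hv
      rw [mem_Ioi] at hv
      have h1 : (0:ℝ) ≤ v ^ A := rpow_nonneg hv.le _
      have h2 : (0:ℝ) ≤ |v - y| ^ B := rpow_nonneg (abs_nonneg _) _
      positivity
    · exact hf₁i.add hf₂i
    · filter_upwards [ae_restrict_mem measurableSet_Ioi] with v hv
      exact hpt v hv
  have hadd : ∫ v in Ioi (0:ℝ), (f₁ v + f₂ v)
      = (∫ v in Ioi (0:ℝ), f₁ v) + ∫ v in Ioi (0:ℝ), f₂ v :=
    MeasureTheory.integral_add hf₁i hf₂i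
  have hsplit : c ^ (-(1:ℝ)/4) = (48:ℝ) ^ (-(1:ℝ)/4) * (t*l₀) ^ (-(1:ℝ)/4) := by
    rw [hc_def, show (48:ℝ)*t*l₀ = 48*(t*l₀) by ring,
      Real.mul_rpow (by norm_num) (by positivity)]
  have hc4 : (0:ℝ) < c ^ (-(1:ℝ)/4) := rpow_pos_of_pos hc _
  calc (∫ v in Ioi (0:ℝ), Real.exp (-48 * t * l₀ * v ^ 2) * v ^ A * |v - y| ^ B)
      ≤ ∫ v in Ioi (0:ℝ), (f₁ v + f₂ v) := hmono
    _ = (∫ v in Ioi (0:ℝ), f₁ v) + ∫ v in Ioi (0:ℝ), f₂ v := hadd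
    _ ≤ Real.Gamma (1/4) * c ^ (-(1:ℝ)/4) + 2 ^ (A+1) / (B+1) * (9/4) * c ^ (-(1:ℝ)/4) := by
        rw [hI₁]
        linarith [hI₂]
    _ = (Real.Gamma (1/4) + 2 ^ (A+1) / (B+1) * (9/4)) * ((48:ℝ) ^ (-(1:ℝ)/4) * (t*l₀) ^ (-(1:ℝ)/4)) := by
        rw [← hsplit]
        ring
    _ = (Real.Gamma (1/4) + 2 ^ (A+1) / (B+1) * (9/4)) * (48:ℝ) ^ (-(1:ℝ)/4) * (t*l₀) ^ (-(1:ℝ)/4) := by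
        ring
end

section
/- With δ as above and ν integrable with ∫_I |s|^{-2}|ν(s)| ds < ∞, the expansion δ(λ) = 1 + δ_1 λ + O(λ^2) holds as λ → 0, where δ_1 = i ∫_I ν(s)/s^2 ds; in particular if ν is even, δ_1 = 2i ∫_{λ_0}^∞ ν(s)/s^2 ds. -/
open MeasureTheory Asymptotics Filter

lemma aux_even_int (l₀ : ℝ) (hl₀ : 0 < l₀) (f : ℝ → ℝ) (hf : ∀ s, f (-s) = f s)
    (h1 : IntegrableOn f (Set.Iic (-l₀))) (h2 : IntegrableOn f (Set.Ici l₀)) :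
    (∫ s in Set.Iic (-l₀) ∪ Set.Ici l₀, f s) = 2 * ∫ s in Set.Ici l₀, f s := by
  have hdisj : Disjoint (Set.Iic (-l₀)) (Set.Ici l₀) :=
    Set.Iic_disjoint_Ici.2 (by linarith)
  rw [setIntegral_union hdisj measurableSet_Ici h1 h2]
  have h3 : (∫ s in Set.Iic (-l₀), f s) = ∫ s in Set.Ici l₀, f s := by
    rw [integral_Ici_eq_integral_Ioi, ← integral_comp_neg_Ioi]
    exact integral_congr_ae (Eventually.of_forall fun s => hf s)
  rw [h3]; ring

lemma aux_odd_int {E : Type*} [NormedAddCommGroup E] [NormedSpace ℝ E]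
    (l₀ : ℝ) (hl₀ : 0 < l₀) (g : ℝ → E) (hg : ∀ s, g (-s) = -g s)
    (h1 : IntegrableOn g (Set.Iic (-l₀))) (h2 : IntegrableOn g (Set.Ici l₀)) :
    (∫ s in Set.Iic (-l₀) ∪ Set.Ici l₀, g s) = 0 := by
  have hdisj : Disjoint (Set.Iic (-l₀)) (Set.Ici l₀) :=
    Set.Iic_disjoint_Ici.2 (by linarith)
  rw [setIntegral_union hdisj measurableSet_Ici h1 h2]
  have h3 : (∫ s in Set.Iic (-l₀), g s) = - ∫ s in Set.Ici l₀, g s := by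
    rw [integral_Ici_eq_integral_Ioi, ← integral_comp_neg_Ioi]
    rw [show (fun s => g (-s)) = (fun s => -g s) from funext fun s => hg s]
    exact integral_neg _
  rw [h3]; abel

/-- With `δ(λ) = exp(i ∫_I ν(s)/(s-λ) ds)`, `I = (-∞,-l₀] ∪ [l₀,∞)` and `ν`
even with `∫_I |ν(s)|/s² ds < ∞`, the expansion `δ(λ) = 1 + δ₁ λ + O(λ²)` holds
as `λ → 0`, where `δ₁ = i ∫_I ν(s)/s² ds = 2i ∫_{l₀}^∞ ν(s)/s² ds`. -/
theorem stmt_13 (l₀ : ℝ) (hl₀ : 0 < l₀) (ν : ℝ → ℝ)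
    (hcont : ContinuousOn ν (Set.Iic (-l₀) ∪ Set.Ici l₀))
    (hbdd : ∃ M : ℝ, ∀ s, |ν s| ≤ M)
    (heven : ∀ s : ℝ, ν (-s) = ν s)
    (hint : IntegrableOn ν (Set.Iic (-l₀) ∪ Set.Ici l₀))
    (hint2 : IntegrableOn (fun s => ν s / s ^ 2) (Set.Iic (-l₀) ∪ Set.Ici l₀)) :
    let I : Set ℝ := Set.Iic (-l₀) ∪ Set.Ici l₀
    let δ : ℂ → ℂ := fun lam =>
      Complex.exp (Complex.I * ∫ s in I, (ν s : ℂ) / ((s : ℂ) - lam))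
    let δ₁ : ℂ := Complex.I * ((∫ s in I, ν s / s ^ 2 : ℝ) : ℂ)
    (fun lam : ℂ => δ lam - 1 - δ₁ * lam) =O[nhds (0 : ℂ)] (fun lam : ℂ => lam ^ 2) ∧
      δ₁ = 2 * Complex.I * ((∫ s in Set.Ici l₀, ν s / s ^ 2 : ℝ) : ℂ) := by
  intro I δ δ₁
  have hImeas : MeasurableSet I := measurableSet_Iic.union measurableSet_Ici
  have hl₀' : l₀ ≠ 0 := ne_of_gt hl₀
  -- basic facts about I
  have habs : ∀ s ∈ I, l₀ ≤ |s| := by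
    rintro s (h | h)
    · simp only [Set.mem_Iic] at h
      rw [abs_of_nonpos (by linarith)]; linarith
    · simp only [Set.mem_Ici] at h
      rw [abs_of_nonneg (by linarith)]; exact h
  have hne : ∀ s ∈ I, s ≠ 0 := by
    intro s hs h0
    have := habs s hs; rw [h0, abs_zero] at this; linarith
  -- the symmetry part
  have hsym : (∫ s in I, ν s / s ^ 2) = 2 * ∫ s in Set.Ici l₀, ν s / s ^ 2 := by
    refine aux_even_int l₀ hl₀ _ (fun s => by rw [heven s]; ring) ?_ ?_
    · exact hint2.mono_set Set.subset_union_left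
    · exact hint2.mono_set Set.subset_union_right
  -- complex integrands
  have hg2eq : (fun s : ℝ => ((ν s / s ^ 2 : ℝ) : ℂ)) = fun s : ℝ => (ν s : ℂ) / (s : ℂ) ^ 2 := by
    funext s; push_cast; ring
  have hint2C : IntegrableOn (fun s : ℝ => (ν s : ℂ) / (s : ℂ) ^ 2) I := by
    rw [← hg2eq]; exact hint2.ofReal
  -- integrability of the main integrand
  have hsl : ∀ (lam : ℂ), ‖lam‖ ≤ l₀ / 2 → ∀ s ∈ I, l₀ / 2 ≤ ‖(s : ℂ) - lam‖ := by
    intro lam hlam s hs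
    have h1 : ‖(s : ℂ)‖ - ‖lam‖ ≤ ‖(s : ℂ) - lam‖ := norm_sub_norm_le _ _
    rw [Complex.norm_real, Real.norm_eq_abs] at h1
    have := habs s hs; linarith
  have hslne : ∀ (lam : ℂ), ‖lam‖ ≤ l₀ / 2 → ∀ s ∈ I, (s : ℂ) - lam ≠ 0 := by
    intro lam hlam s hs h0
    have := hsl lam hlam s hs; rw [h0, norm_zero] at this; linarith
  have hintF : ∀ (lam : ℂ), ‖lam‖ ≤ l₀ / 2 →
      IntegrableOn (fun s : ℝ => (ν s : ℂ) / ((s : ℂ) - lam)) I := by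
    intro lam hlam
    have hc : ContinuousOn (fun s : ℝ => (ν s : ℂ) / ((s : ℂ) - lam)) I := by
      refine ContinuousOn.div ?_ ?_ (hslne lam hlam)
      · exact Complex.continuous_ofReal.comp_continuousOn hcont
      · exact ((Complex.continuous_ofReal.sub continuous_const)).continuousOn
    refine Integrable.mono' ((hint.norm).const_mul (2 / l₀))
      (hc.aestronglyMeasurable hImeas) ?_
    rw [ae_restrict_iff' hImeas]
    refine Eventually.of_forall fun s hs => ?_
    have hd := hsl lam hlam s hs
    have hdpos : (0 : ℝ) < ‖(s : ℂ) - lam‖ := by linarith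
    rw [norm_div, Complex.norm_real, Real.norm_eq_abs]
    have h1 : |ν s| / ‖(s : ℂ) - lam‖ ≤ |ν s| / (l₀ / 2) := by
      gcongr
    have h2 : |ν s| / (l₀ / 2) = 2 / l₀ * |ν s| := by
      field_simp
    linarith
  have hint1C : IntegrableOn (fun s : ℝ => (ν s : ℂ) / (s : ℂ)) I := by
    have := hintF 0 (by rw [norm_zero]; positivity)
    simpa using this
  -- odd integral vanishes
  have hoddC : (∫ s in I, (ν s : ℂ) / (s : ℂ)) = 0 := by
    refine aux_odd_int l₀ hl₀ _ (fun s => ?_) ?_ ?_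
    · rw [heven s]; push_cast; rw [div_neg]
    · exact hint1C.mono_set Set.subset_union_left
    · exact hint1C.mono_set Set.subset_union_right
  -- constants
  set K₀ : ℝ := ∫ s in I, |ν s / s ^ 2| with hK₀def
  have hK₀ : 0 ≤ K₀ := integral_nonneg fun s => abs_nonneg _
  have hintabs : IntegrableOn (fun s => |ν s / s ^ 2|) I := hint2.abs
  set c : ℝ := ∫ s in I, ν s / s ^ 2 with hcdef
  have hcC : ((c : ℝ) : ℂ) = ∫ s in I, (ν s : ℂ) / (s : ℂ) ^ 2 := by
    rw [← hg2eq, hcdef]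
    exact (integral_ofReal (𝕜 := ℂ)).symm
  -- key estimate
  have hkey : ∀ (lam : ℂ), ‖lam‖ ≤ l₀ / 2 →
      ‖(∫ s in I, (ν s : ℂ) / ((s : ℂ) - lam)) - lam * ((c : ℝ) : ℂ)‖
        ≤ 2 / l₀ * K₀ * ‖lam‖ ^ 2 := by
    intro lam hlam
    have hF := hintF lam hlam
    have heq : (∫ s in I, (ν s : ℂ) / ((s : ℂ) - lam)) - lam * ((c : ℝ) : ℂ)
        = ∫ s in I, ((ν s : ℂ) / ((s : ℂ) - lam) - (ν s : ℂ) / (s : ℂ)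
            - lam * ((ν s : ℂ) / (s : ℂ) ^ 2)) := by
      have hFsub : IntegrableOn (fun s : ℝ => (ν s : ℂ) / ((s : ℂ) - lam)
          - (ν s : ℂ) / (s : ℂ)) I := hF.sub hint1C
      have hmul : IntegrableOn (fun s : ℝ => lam * ((ν s : ℂ) / (s : ℂ) ^ 2)) I :=
        hint2C.const_mul lam
      rw [integral_sub hFsub hmul, integral_sub hF hint1C,
        integral_const_mul, hoddC, sub_zero, hcC]
    rw [heq]
    have hb : ‖∫ s in I, ((ν s : ℂ) / ((s : ℂ) - lam) - (ν s : ℂ) / (s : ℂ)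
            - lam * ((ν s : ℂ) / (s : ℂ) ^ 2))‖
        ≤ ∫ s in I, 2 / l₀ * ‖lam‖ ^ 2 * |ν s / s ^ 2| := by
      refine norm_integral_le_of_norm_le (hintabs.const_mul _) ?_
      rw [ae_restrict_iff' hImeas]
      refine Eventually.of_forall fun s hs => ?_
      have hs0 : (s : ℂ) ≠ 0 := Complex.ofReal_ne_zero.2 (hne s hs)
      have hd := hsl lam hlam s hs
      have hdpos : (0 : ℝ) < ‖(s : ℂ) - lam‖ := by linarith
      have hdne : (s : ℂ) - lam ≠ 0 := hslne lam hlam s hs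
      have hid : (ν s : ℂ) / ((s : ℂ) - lam) - (ν s : ℂ) / (s : ℂ)
            - lam * ((ν s : ℂ) / (s : ℂ) ^ 2)
          = lam ^ 2 * ((ν s : ℂ) / ((s : ℂ) ^ 2 * ((s : ℂ) - lam))) := by
        field_simp
        ring
      rw [hid, norm_mul, norm_pow, norm_div, norm_mul, norm_pow,
        Complex.norm_real, Complex.norm_real, Real.norm_eq_abs, Real.norm_eq_abs]
      have hBpos : (0 : ℝ) < |s| ^ 2 := by
        have := abs_pos.2 (hne s hs); positivity
      have habseq : |ν s / s ^ 2| = |ν s| / |s| ^ 2 := by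
        rw [abs_div, abs_pow]
      rw [habseq]
      have h1 : |ν s| / (|s| ^ 2 * ‖(s : ℂ) - lam‖)
          ≤ 2 / l₀ * (|ν s| / |s| ^ 2) := by
        rw [← div_div]
        calc |ν s| / |s| ^ 2 / ‖(s : ℂ) - lam‖
            ≤ |ν s| / |s| ^ 2 / (l₀ / 2) := by
              gcongr
          _ = 2 / l₀ * (|ν s| / |s| ^ 2) := by field_simp
      calc ‖lam‖ ^ 2 * (|ν s| / (|s| ^ 2 * ‖(s : ℂ) - lam‖))
          ≤ ‖lam‖ ^ 2 * (2 / l₀ * (|ν s| / |s| ^ 2)) := by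
            exact mul_le_mul_of_nonneg_left h1 (by positivity)
        _ = 2 / l₀ * ‖lam‖ ^ 2 * (|ν s| / |s| ^ 2) := by ring
    rw [integral_const_mul] at hb
    calc ‖_‖ ≤ 2 / l₀ * ‖lam‖ ^ 2 * K₀ := hb
      _ = 2 / l₀ * K₀ * ‖lam‖ ^ 2 := by ring
  -- bound on F itself
  set K₁ : ℝ := |c| + K₀ with hK₁def
  have hK₁ : 0 ≤ K₁ := by positivity
  have hFbd : ∀ (lam : ℂ), ‖lam‖ ≤ l₀ / 2 →
      ‖∫ s in I, (ν s : ℂ) / ((s : ℂ) - lam)‖ ≤ K₁ * ‖lam‖ := by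
    intro lam hlam
    have h1 := hkey lam hlam
    have h2 : ‖lam * ((c : ℝ) : ℂ)‖ = ‖lam‖ * |c| := by
      rw [norm_mul, Complex.norm_real, Real.norm_eq_abs]
    have h3 : ‖∫ s in I, (ν s : ℂ) / ((s : ℂ) - lam)‖
        ≤ ‖(∫ s in I, (ν s : ℂ) / ((s : ℂ) - lam)) - lam * ((c : ℝ) : ℂ)‖
          + ‖lam * ((c : ℝ) : ℂ)‖ := by
      have := norm_sub_le ((∫ s in I, (ν s : ℂ) / ((s : ℂ) - lam)) - lam * ((c : ℝ) : ℂ))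
        (-(lam * ((c : ℝ) : ℂ)))
      simpa [sub_neg_eq_add] using this
    have h4 : 2 / l₀ * K₀ * ‖lam‖ ^ 2 ≤ K₀ * ‖lam‖ := by
      have h5 : ‖lam‖ ^ 2 ≤ ‖lam‖ * (l₀ / 2) := by
        have := norm_nonneg lam
        nlinarith
      calc 2 / l₀ * K₀ * ‖lam‖ ^ 2 ≤ 2 / l₀ * K₀ * (‖lam‖ * (l₀ / 2)) := by
            exact mul_le_mul_of_nonneg_left h5 (by positivity)
        _ = K₀ * ‖lam‖ := by field_simp
    rw [h2] at h3
    calc ‖∫ s in I, (ν s : ℂ) / ((s : ℂ) - lam)‖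
        ≤ 2 / l₀ * K₀ * ‖lam‖ ^ 2 + ‖lam‖ * |c| := by linarith
      _ ≤ K₀ * ‖lam‖ + ‖lam‖ * |c| := by linarith
      _ = K₁ * ‖lam‖ := by rw [hK₁def]; ring
  -- the big-O part
  constructor
  · rw [isBigO_iff]
    refine ⟨K₁ ^ 2 + 2 / l₀ * K₀, ?_⟩
    have hεpos : 0 < min (l₀ / 2) (1 / (K₁ + 1)) := by positivity
    filter_upwards [Metric.ball_mem_nhds (0 : ℂ) hεpos] with lam hmem
    rw [mem_ball_zero_iff] at hmem
    have hlam1 : ‖lam‖ ≤ l₀ / 2 := le_of_lt (lt_of_lt_of_le hmem (min_le_left _ _))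
    have hlam2 : ‖lam‖ ≤ 1 / (K₁ + 1) := le_of_lt (lt_of_lt_of_le hmem (min_le_right _ _))
    set F : ℂ := ∫ s in I, (ν s : ℂ) / ((s : ℂ) - lam) with hFdef
    have hF1 : ‖F‖ ≤ K₁ * ‖lam‖ := hFbd lam hlam1
    have hFle1 : ‖F‖ ≤ 1 := by
      have : K₁ * ‖lam‖ ≤ K₁ * (1 / (K₁ + 1)) :=
        mul_le_mul_of_nonneg_left hlam2 hK₁
      have h6 : K₁ * (1 / (K₁ + 1)) ≤ 1 := by
        rw [mul_one_div]
        exact div_le_one_of_le₀ (by linarith) (by positivity)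
      exact hF1.trans (this.trans h6)
    have hIF : ‖Complex.I * F‖ = ‖F‖ := by
      rw [norm_mul, Complex.norm_I, one_mul]
    have hexp : ‖Complex.exp (Complex.I * F) - 1 - Complex.I * F‖ ≤ ‖F‖ ^ 2 := by
      have := Complex.norm_exp_sub_one_sub_id_le (x := Complex.I * F)
        (by rw [hIF]; exact hFle1)
      rw [hIF] at this
      exact this
    have hδ : δ lam - 1 - δ₁ * lam
        = (Complex.exp (Complex.I * F) - 1 - Complex.I * F)
          + Complex.I * (F - lam * ((c : ℝ) : ℂ)) := by
      simp only [δ, δ₁, ← hFdef, ← hcdef]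
      ring
    rw [hδ]
    have hn2 : ‖Complex.I * (F - lam * ((c : ℝ) : ℂ))‖ ≤ 2 / l₀ * K₀ * ‖lam‖ ^ 2 := by
      rw [norm_mul, Complex.norm_I, one_mul]
      exact hkey lam hlam1
    have hF2 : ‖F‖ ^ 2 ≤ K₁ ^ 2 * ‖lam‖ ^ 2 := by
      calc ‖F‖ ^ 2 ≤ (K₁ * ‖lam‖) ^ 2 := by
            exact pow_le_pow_left₀ (norm_nonneg _) hF1 2
        _ = K₁ ^ 2 * ‖lam‖ ^ 2 := by ring
    calc ‖(Complex.exp (Complex.I * F) - 1 - Complex.I * F)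
          + Complex.I * (F - lam * ((c : ℝ) : ℂ))‖
        ≤ ‖Complex.exp (Complex.I * F) - 1 - Complex.I * F‖
          + ‖Complex.I * (F - lam * ((c : ℝ) : ℂ))‖ := norm_add_le _ _
      _ ≤ K₁ ^ 2 * ‖lam‖ ^ 2 + 2 / l₀ * K₀ * ‖lam‖ ^ 2 :=
          add_le_add (hexp.trans hF2) hn2
      _ = (K₁ ^ 2 + 2 / l₀ * K₀) * ‖lam ^ 2‖ := by
          rw [norm_pow]; ring
  · simp only [δ₁]
    rw [← hcdef, hsym]
    push_cast
    ring
end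

section
/- Let μ solve the Volterra integral equation μ(x) = I + ∫_{-∞}^x K(x,y) U(y) μ(y) dy where ‖K(x,y)U(y)‖ ≤ g(y) with g ∈ L^1(ℝ), g ≥ 0. Then a (unique, bounded continuous) solution exists and satisfies ‖μ(x) - I‖ ≤ exp(∫_{-∞}^x g(y) dy) - 1 for all x. -/
open MeasureTheory

attribute [local instance] Matrix.linftyOpNormedAddCommGroup Matrix.linftyOpNormedRing
  Matrix.linftyOpNormedAlgebra

attribute [local instance] Matrix.linfty_opNormOneClass

noncomputable instance matCENorm : ContinuousENorm (Matrix (Fin 2) (Fin 2) ℂ) :=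
  SeminormedAddGroup.toContinuousENorm
instance matPMS : TopologicalSpace.PseudoMetrizableSpace (Matrix (Fin 2) (Fin 2) ℂ) :=
  inferInstanceAs (TopologicalSpace.PseudoMetrizableSpace (Fin 2 → Fin 2 → ℂ))

open Set

noncomputable def Gint (g : ℝ → ℝ) (x : ℝ) : ℝ := ∫ y in Set.Iic x, g y

theorem ae_ne_vol (x₀ : ℝ) : ∀ᵐ y : ℝ, y ≠ x₀ :=
  ae_iff.2 (by simpa using measure_singleton x₀)

theorem real_exp_tsum (t : ℝ) : Real.exp t = ∑' n : ℕ, t ^ n / n.factorial := by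
  rw [Real.exp_eq_exp_ℝ, NormedSpace.exp_eq_tsum_div]

section Glem
variable {g : ℝ → ℝ}
variable (hg : Integrable g) (hg0 : ∀ y, 0 ≤ g y)

include hg0 in
theorem Gint_nonneg (x : ℝ) : 0 ≤ Gint g x :=
  setIntegral_nonneg measurableSet_Iic fun y _ => hg0 y

include hg hg0
theorem Gint_mono : Monotone (Gint g) := fun _ _ hab =>
  setIntegral_mono_set hg.integrableOn (Filter.Eventually.of_forall hg0)
    (HasSubset.Subset.eventuallyLE (Iic_subset_Iic.2 hab))

theorem Gint_le (x : ℝ) : Gint g x ≤ ∫ y, g y :=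
  setIntegral_le_integral hg (Filter.Eventually.of_forall hg0)

theorem Gint_cont : Continuous (Gint g) := by
  rw [continuous_iff_continuousAt]
  intro x₀
  have hrepr : Gint g = fun x => ∫ y, Set.indicator (Set.Iic x) g y := by
    funext x; rw [integral_indicator measurableSet_Iic]; rfl
  rw [ContinuousAt, hrepr]
  apply tendsto_integral_filter_of_dominated_convergence g
  · exact Filter.Eventually.of_forall fun x => hg.1.indicator measurableSet_Iic
  · refine Filter.Eventually.of_forall fun x => Filter.Eventually.of_forall fun y => ?_
    by_cases hy : y ∈ Set.Iic x
    · rw [Set.indicator_of_mem hy]; simp [Real.norm_eq_abs, abs_of_nonneg (hg0 y)]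
    · rw [Set.indicator_of_notMem hy]; simpa using hg0 y
  · exact hg
  · filter_upwards [ae_ne_vol x₀] with y hy
    rcases lt_or_gt_of_ne hy with h | h
    · have he : ∀ᶠ x in nhds x₀, Set.indicator (Set.Iic x) g y = Set.indicator (Set.Iic x₀) g y := by
        filter_upwards [eventually_gt_nhds h] with x hx
        rw [Set.indicator_of_mem (Set.mem_Iic.2 hx.le), Set.indicator_of_mem (Set.mem_Iic.2 h.le)]
      exact Filter.Tendsto.congr' (Filter.EventuallyEq.symm he) tendsto_const_nhds
    · have he : ∀ᶠ x in nhds x₀, Set.indicator (Set.Iic x) g y = Set.indicator (Set.Iic x₀) g y := by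
        filter_upwards [eventually_lt_nhds h] with x hx
        rw [Set.indicator_of_notMem (by simpa using hx.not_ge),
          Set.indicator_of_notMem (by simpa using h.not_ge)]
      exact Filter.Tendsto.congr' (Filter.EventuallyEq.symm he) tendsto_const_nhds


theorem Gpow_integrable (n : ℕ) (ν : Measure ℝ) (hν : ν ≤ volume) :
    Integrable (fun y => Gint g y ^ n * g y) ν := by
  refine Integrable.bdd_mul (c := (∫ y, g y) ^ n) (hg.mono_measure hν)
    (((Gint_cont hg hg0).pow n).aestronglyMeasurable) ?_
  refine Filter.Eventually.of_forall fun y => ?_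
  rw [Real.norm_eq_abs, abs_of_nonneg (pow_nonneg (Gint_nonneg hg0 y) n)]
  exact pow_le_pow_left₀ (Gint_nonneg hg0 y) (Gint_le hg hg0 y) n

theorem GpowA (n : ℕ) (x : ℝ) :
    ∫ y in Set.Iic x, Gint g y ^ n * g y = Gint g x ^ (n + 1) / (n + 1) := by
  induction n generalizing x with
  | zero => simp [Gint]
  | succ n ih =>
    set G := Gint g with hG
    set μx := (volume : Measure ℝ).restrict (Set.Iic x) with hμx
    have hμxle : μx ≤ volume := Measure.restrict_le_self
    have hGn : ∀ m : ℕ, Integrable (fun y => G y ^ m * g y) μx :=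
      fun m => Gpow_integrable hg hg0 m μx hμxle
    set f : ℝ → ℝ → ℝ := fun y t => if y < t then G y ^ n * g y * g t else 0 with hf
    have hFint : Integrable (Function.uncurry f) (μx.prod μx) := by
      have hbase : Integrable (fun p : ℝ × ℝ => (G p.1 ^ n * g p.1) * g p.2) (μx.prod μx) :=
        (hGn n).mul_prod (hg.mono_measure hμxle)
      have heq : Function.uncurry f =
          Set.indicator {p : ℝ × ℝ | p.1 < p.2} (fun p => (G p.1 ^ n * g p.1) * g p.2) := by
        funext p
        simp only [Function.uncurry, hf, Set.indicator_apply, Set.mem_setOf_eq]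
      rw [heq]
      exact hbase.indicator (measurableSet_lt measurable_fst measurable_snd)
    have hswap := integral_integral_swap hFint
    -- left side
    have hL : (∫ y, (∫ t, f y t ∂μx) ∂μx) = ∫ y in Set.Iic x, (G y ^ n * g y) * (G x - G y) := by
      refine setIntegral_congr_ae measurableSet_Iic ?_
      refine Filter.Eventually.of_forall fun y hy => ?_
      have h1 : (fun t => f y t) = Set.indicator (Set.Ioi y) (fun t => (G y ^ n * g y) * g t) := by
        funext t; simp only [hf, Set.indicator_apply, Set.mem_Ioi]
      rw [h1, integral_indicator measurableSet_Ioi, hμx,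
        Measure.restrict_restrict measurableSet_Ioi, Set.Ioi_inter_Iic,
        integral_const_mul]
      congr 1
      have := intervalIntegral.integral_Iic_sub_Iic (hg.integrableOn (s := Set.Iic y)) (hg.integrableOn (s := Set.Iic x))
      rw [intervalIntegral.integral_of_le hy] at this
      rw [← this, hG]; rfl
    -- right side
    have hR : (∫ t, (∫ y, f y t ∂μx) ∂μx) = ∫ t in Set.Iic x, (G t ^ (n + 1) / (n + 1)) * g t := by
      refine setIntegral_congr_ae measurableSet_Iic ?_
      refine Filter.Eventually.of_forall fun t ht => ?_
      have h1 : (fun y => f y t) = Set.indicator (Set.Iio t) (fun y => (G y ^ n * g y) * g t) := by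
        funext y; simp only [hf, Set.indicator_apply, Set.mem_Iio]
      rw [h1, integral_indicator measurableSet_Iio, hμx,
        Measure.restrict_restrict measurableSet_Iio,
        Set.inter_eq_self_of_subset_left (Set.Iio_subset_Iic_self.trans (Set.Iic_subset_Iic.2 ht)),
        integral_mul_const _ (fun y => G y ^ n * g y), ← integral_Iic_eq_integral_Iio, ih t]
    rw [hL, hR] at hswap
    -- expand both sides
    have hexp : (fun y => (G y ^ n * g y) * (G x - G y)) =
        fun y => G x * (G y ^ n * g y) - G y ^ (n + 1) * g y := by
      funext y; ring
    rw [hexp, integral_sub ((hGn n).const_mul (G x)) (hGn (n + 1)), integral_const_mul, ih x] at hswap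
    have hdiv : (fun t => (G t ^ (n + 1) / (n + 1)) * g t) =
        fun t => (1 / ((n : ℝ) + 1)) * (G t ^ (n + 1) * g t) := by
      funext t; push_cast; ring
    rw [hdiv, integral_const_mul] at hswap
    set A := ∫ y in Set.Iic x, G y ^ (n + 1) * g y
    have hn1 : ((n : ℝ) + 1) ≠ 0 := by positivity
    have hn2 : ((n : ℝ) + 1 + 1) ≠ 0 := by positivity
    have : G x * (G x ^ (n + 1) / ((n : ℝ) + 1)) - A = (1 / ((n : ℝ) + 1)) * A := hswap
    push_cast
    have hGpow : G x * G x ^ (n + 1) = G x ^ (n + 2) := by ring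
    field_simp at this ⊢
    nlinarith [this]

end Glem

section Glem2
variable {g : ℝ → ℝ}
variable (hg : Integrable g) (hg0 : ∀ y, 0 ≤ g y)
include hg hg0
theorem Gexp_integrable (ν : Measure ℝ) (hν : ν ≤ volume) :
    Integrable (fun y => Real.exp (Gint g y) * g y) ν := by
  refine Integrable.bdd_mul (c := Real.exp (∫ y, g y)) (hg.mono_measure hν)
    ((Real.continuous_exp.comp (Gint_cont hg hg0)).aestronglyMeasurable) ?_
  refine Filter.Eventually.of_forall fun y => ?_
  rw [Real.norm_eq_abs, abs_of_nonneg (Real.exp_pos _).le]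
  exact Real.exp_le_exp.2 (Gint_le hg hg0 y)

theorem Gexp_eq (x : ℝ) :
    ∫ y in Set.Iic x, Real.exp (Gint g y) * g y = Real.exp (Gint g x) - 1 := by
  set G := Gint g with hG
  set F : ℕ → ℝ → ℝ := fun n y => (1 / (n.factorial : ℝ)) * (G y ^ n * g y) with hF
  have hμle : (volume : Measure ℝ).restrict (Set.Iic x) ≤ volume := Measure.restrict_le_self
  have hFint : ∀ n, Integrable (F n) ((volume : Measure ℝ).restrict (Set.Iic x)) :=
    fun n => (Gpow_integrable hg hg0 n _ hμle).const_mul _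
  have hInt : ∀ n : ℕ, ∫ y in Set.Iic x, F n y = G x ^ (n + 1) / (n + 1).factorial := by
    intro n
    rw [hF]
    simp only
    rw [integral_const_mul, GpowA hg hg0 n x, Nat.factorial_succ]
    have h1 : (n.factorial : ℝ) ≠ 0 := Nat.cast_ne_zero.2 n.factorial_ne_zero
    have h2 : ((n:ℝ) + 1) ≠ 0 := by positivity
    push_cast
    rw [mul_comm ((n:ℝ)+1) (n.factorial:ℝ)] 
    field_simp
    rfl
  have hSum : Summable fun n : ℕ => G x ^ (n + 1) / (n + 1).factorial :=
    (summable_nat_add_iff 1).2 (Real.summable_pow_div_factorial (G x))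
  have hkey : ∑' n, ∫ y in Set.Iic x, F n y = ∫ y in Set.Iic x, ∑' n, F n y := by
    refine integral_tsum_of_summable_integral_norm hFint ?_
    have : ∀ n : ℕ, ∫ y in Set.Iic x, ‖F n y‖ = ∫ y in Set.Iic x, F n y := by
      intro n
      refine setIntegral_congr_ae measurableSet_Iic (Filter.Eventually.of_forall fun y _ => ?_)
      rw [Real.norm_eq_abs, abs_of_nonneg]
      exact mul_nonneg (by positivity) (mul_nonneg (pow_nonneg (Gint_nonneg hg0 y) n) (hg0 y))
    simp only [this, hInt]
    exact hSum
  have hpt : ∀ y, ∑' n, F n y = Real.exp (G y) * g y := by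
    intro y
    rw [hF]
    simp only
    have h1 : ∑' n : ℕ, 1 / (n.factorial : ℝ) * (G y ^ n * g y)
        = ∑' n : ℕ, (G y ^ n / n.factorial) * g y := tsum_congr fun n => by ring
    rw [h1, tsum_mul_right, ← real_exp_tsum (G y)]
  have hL : ∑' n, ∫ y in Set.Iic x, F n y = Real.exp (G x) - 1 := by
    simp only [hInt]
    have := Summable.tsum_eq_zero_add (Real.summable_pow_div_factorial (G x))
    rw [← real_exp_tsum (G x)] at this
    simp only [pow_zero, Nat.factorial_zero, Nat.cast_one, div_one] at this
    linarith [this]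
  rw [← hL, hkey]
  exact setIntegral_congr_ae measurableSet_Iic (Filter.Eventually.of_forall fun y _ => (hpt y).symm)
end Glem2

noncomputable def Vphi (K : ℝ → ℝ → Matrix (Fin 2) (Fin 2) ℂ)
    (U : ℝ → Matrix (Fin 2) (Fin 2) ℂ) (μ : ℝ → Matrix (Fin 2) (Fin 2) ℂ) (x : ℝ) :
    Matrix (Fin 2) (Fin 2) ℂ := ∫ y in Set.Iic x, K x y * U y * μ y

section Op
variable {K : ℝ → ℝ → Matrix (Fin 2) (Fin 2) ℂ} {U : ℝ → Matrix (Fin 2) (Fin 2) ℂ} {g : ℝ → ℝ}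
variable (hKcont : Continuous fun p : ℝ × ℝ => K p.1 p.2) (hUcont : Continuous U)
  (hg : Integrable g) (hg0 : ∀ y, 0 ≤ g y)
  (hbound : ∀ x y : ℝ, y ≤ x → ‖K x y * U y‖ ≤ g y)

include hKcont hUcont in
theorem Vintegrand_cont (μ : ℝ → Matrix (Fin 2) (Fin 2) ℂ) (hμc : Continuous μ) (x : ℝ) :
    Continuous fun y => K x y * U y * μ y :=
  (((hKcont.comp (continuous_const.prodMk continuous_id)).mul hUcont).mul hμc)

include hKcont hUcont hg hg0 hbound in
theorem Vintegrand_integrable (μ : ℝ → Matrix (Fin 2) (Fin 2) ℂ) (C : ℝ)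
    (hμc : Continuous μ) (hμC : ∀ y, ‖μ y‖ ≤ C) (x : ℝ) :
    IntegrableOn (fun y => K x y * U y * μ y) (Set.Iic x) := by
  refine Integrable.mono' ((hg.integrableOn).mul_const C)
    (Vintegrand_cont hKcont hUcont μ hμc x).aestronglyMeasurable ?_
  rw [ae_restrict_iff' measurableSet_Iic]
  refine Filter.Eventually.of_forall fun y hy => ?_
  calc ‖K x y * U y * μ y‖ ≤ ‖K x y * U y‖ * ‖μ y‖ := norm_mul_le _ _
    _ ≤ g y * C := mul_le_mul (hbound x y hy) (hμC y) (norm_nonneg _) (hg0 y)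

include hKcont hUcont hg hg0 hbound in
theorem Vphi_norm_le (μ : ℝ → Matrix (Fin 2) (Fin 2) ℂ) (C : ℝ)
    (hμc : Continuous μ) (hμC : ∀ y, ‖μ y‖ ≤ C) (x : ℝ) (b : ℝ → ℝ)
    (hb : ∀ y, ‖μ y‖ ≤ b y)
    (hbint : IntegrableOn (fun y => b y * g y) (Set.Iic x)) :
    ‖Vphi K U μ x‖ ≤ ∫ y in Set.Iic x, b y * g y := by
  refine (norm_integral_le_integral_norm _).trans ?_
  refine integral_mono_ae ((Vintegrand_integrable hKcont hUcont hg hg0 hbound μ C hμc hμC x).norm)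
    hbint ?_
  filter_upwards [ae_restrict_mem measurableSet_Iic] with y hy
  calc ‖K x y * U y * μ y‖ ≤ ‖K x y * U y‖ * ‖μ y‖ := norm_mul_le _ _
    _ ≤ g y * b y := mul_le_mul (hbound x y hy) (hb y) (norm_nonneg _) (hg0 y)
    _ = b y * g y := mul_comm _ _

include hKcont hUcont hg hg0 hbound in
theorem Vphi_cont (μ : ℝ → Matrix (Fin 2) (Fin 2) ℂ) (C : ℝ)
    (hμc : Continuous μ) (hμC : ∀ y, ‖μ y‖ ≤ C) :
    Continuous (Vphi K U μ) := by
  have hC0 : 0 ≤ C := (norm_nonneg _).trans (hμC 0)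
  rw [continuous_iff_continuousAt]
  intro x₀
  set F : ℝ → ℝ → Matrix (Fin 2) (Fin 2) ℂ :=
    fun x => Set.indicator (Set.Iic x) (fun y => K x y * U y * μ y) with hF
  have hrepr : ∀ x : ℝ, x ≤ x₀ + 1 → Vphi K U μ x = ∫ y in Set.Iic (x₀ + 1), F x y := by
    intro x hx
    rw [hF]
    simp only
    rw [integral_indicator measurableSet_Iic, Measure.restrict_restrict measurableSet_Iic,
      Set.Iic_inter_Iic, min_eq_left hx]
    rfl
  have htend : Filter.Tendsto (fun x => ∫ y in Set.Iic (x₀ + 1), F x y) (nhds x₀)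
      (nhds (∫ y in Set.Iic (x₀ + 1), F x₀ y)) := by
    apply tendsto_integral_filter_of_dominated_convergence (fun y => g y * C)
    · refine Filter.Eventually.of_forall fun x => ?_
      exact ((Vintegrand_cont hKcont hUcont μ hμc x).aestronglyMeasurable).indicator
        measurableSet_Iic
    · refine Filter.Eventually.of_forall fun x => Filter.Eventually.of_forall fun y => ?_
      by_cases hy : y ∈ Set.Iic x
      · rw [hF]; simp only [Set.indicator_of_mem hy]
        calc ‖K x y * U y * μ y‖ ≤ ‖K x y * U y‖ * ‖μ y‖ := norm_mul_le _ _
          _ ≤ g y * C := mul_le_mul (hbound x y hy) (hμC y) (norm_nonneg _) (hg0 y)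
      · rw [hF]; simp only [Set.indicator_of_notMem hy, norm_zero]
        exact mul_nonneg (hg0 y) hC0
    · exact (hg.integrableOn).mul_const C
    · refine Filter.Eventually.filter_mono (ae_mono Measure.restrict_le_self) ?_
      filter_upwards [ae_ne_vol x₀] with y hy
      rcases lt_or_gt_of_ne hy with h | h
      · have he : ∀ᶠ x in nhds x₀, F x y = K x y * U y * μ y := by
          filter_upwards [eventually_gt_nhds h] with x hx
          rw [hF]; simp only [Set.indicator_of_mem (Set.mem_Iic.2 hx.le)]
        have hc : Filter.Tendsto (fun x => K x y * U y * μ y) (nhds x₀)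
            (nhds (K x₀ y * U y * μ y)) :=
          (((hKcont.comp (continuous_id.prodMk continuous_const)).mul
            continuous_const).mul continuous_const).tendsto x₀
        have : F x₀ y = K x₀ y * U y * μ y := by
          rw [hF]; simp only [Set.indicator_of_mem (Set.mem_Iic.2 h.le)]
        rw [this]
        exact hc.congr' (Filter.EventuallyEq.symm he)
      · have he : ∀ᶠ x in nhds x₀, F x y = 0 := by
          filter_upwards [eventually_lt_nhds h] with x hx
          rw [hF]; simp only [Set.indicator_of_notMem (by simpa using hx.not_ge : y ∉ Set.Iic x)]
        have : F x₀ y = 0 := by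
          rw [hF]; simp only [Set.indicator_of_notMem (by simpa using h.not_ge : y ∉ Set.Iic x₀)]
        rw [this]
        exact Filter.Tendsto.congr' (Filter.EventuallyEq.symm he) tendsto_const_nhds
  rw [ContinuousAt, hrepr x₀ (by linarith)]
  refine Filter.Tendsto.congr' ?_ htend
  filter_upwards [Iic_mem_nhds (by linarith : x₀ < x₀ + 1)] with x hx
  exact (hrepr x hx).symm
include hKcont hUcont hg hg0 hbound in
theorem Vphi_sub (μ ν : ℝ → Matrix (Fin 2) (Fin 2) ℂ) (C : ℝ)
    (hμc : Continuous μ) (hμC : ∀ y, ‖μ y‖ ≤ C) (hνc : Continuous ν) (hνC : ∀ y, ‖ν y‖ ≤ C)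
    (x : ℝ) :
    Vphi K U μ x - Vphi K U ν x = Vphi K U (fun y => μ y - ν y) x := by
  rw [Vphi, Vphi, Vphi,
    ← integral_sub (Vintegrand_integrable hKcont hUcont hg hg0 hbound μ C hμc hμC x)
      (Vintegrand_integrable hKcont hUcont hg hg0 hbound ν C hνc hνC x)]
  congr 1; funext y; rw [mul_sub]

include hKcont hUcont hg hg0 hbound in
theorem Vphi_pow_le (μ : ℝ → Matrix (Fin 2) (Fin 2) ℂ) (C : ℝ)
    (hμc : Continuous μ) (hμC : ∀ y, ‖μ y‖ ≤ C) (c : ℝ) (n : ℕ)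
    (hb : ∀ y, ‖μ y‖ ≤ c * Gint g y ^ n) (x : ℝ) :
    ‖Vphi K U μ x‖ ≤ c / (n + 1) * Gint g x ^ (n + 1) := by
  have hbint : IntegrableOn (fun y => (c * Gint g y ^ n) * g y) (Set.Iic x) := by
    have := (Gpow_integrable hg hg0 n ((volume : Measure ℝ).restrict (Set.Iic x))
      Measure.restrict_le_self).const_mul c
    exact this.congr (Filter.Eventually.of_forall fun y => by ring)
  have h1 := Vphi_norm_le hKcont hUcont hg hg0 hbound μ C hμc hμC x _ hb hbint
  refine h1.trans ?_
  have h2 : ∫ y in Set.Iic x, (c * Gint g y ^ n) * g y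
      = c * ∫ y in Set.Iic x, Gint g y ^ n * g y := by
    rw [← integral_const_mul]; congr 1; funext y; ring
  rw [h2, GpowA hg hg0 n x]
  exact le_of_eq (by ring)

-- The operator
noncomputable def Tmap (K : ℝ → ℝ → Matrix (Fin 2) (Fin 2) ℂ)
    (U : ℝ → Matrix (Fin 2) (Fin 2) ℂ) (g : ℝ → ℝ)
    (hKcont : Continuous fun p : ℝ × ℝ => K p.1 p.2) (hUcont : Continuous U)
    (hg : Integrable g) (hg0 : ∀ y, 0 ≤ g y)
    (hbound : ∀ x y : ℝ, y ≤ x → ‖K x y * U y‖ ≤ g y)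
    (μ : BoundedContinuousFunction ℝ (Matrix (Fin 2) (Fin 2) ℂ)) :
    BoundedContinuousFunction ℝ (Matrix (Fin 2) (Fin 2) ℂ) :=
  BoundedContinuousFunction.ofNormedAddCommGroup (fun x => 1 + Vphi K U μ x)
    (continuous_const.add (Vphi_cont hKcont hUcont hg hg0 hbound μ ‖μ‖ μ.continuous
      μ.norm_coe_le_norm))
    (1 + ‖μ‖ * (∫ y, g y))
    (by
      intro x
      refine (norm_add_le _ _).trans ?_
      rw [norm_one]
      gcongr
      have hb := Vphi_norm_le hKcont hUcont hg hg0 hbound μ ‖μ‖ μ.continuous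
        μ.norm_coe_le_norm x (fun _ => ‖μ‖) μ.norm_coe_le_norm
        ((hg.integrableOn).const_mul ‖μ‖)
      refine hb.trans ?_
      rw [integral_const_mul]
      have : Gint g x ≤ ∫ y, g y := Gint_le hg hg0 x
      have h0 : (0:ℝ) ≤ ‖μ‖ := norm_nonneg μ
      calc ‖μ‖ * ∫ y in Set.Iic x, g y = ‖μ‖ * Gint g x := rfl
        _ ≤ ‖μ‖ * ∫ y, g y := by gcongr)

theorem Tmap_apply (μ : BoundedContinuousFunction ℝ (Matrix (Fin 2) (Fin 2) ℂ)) (x : ℝ) :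
    Tmap K U g hKcont hUcont hg hg0 hbound μ x = 1 + Vphi K U μ x := rfl

include hKcont hUcont hg hg0 hbound in
theorem Tmap_diff (μ ν : BoundedContinuousFunction ℝ (Matrix (Fin 2) (Fin 2) ℂ))
    (c : ℝ) (n : ℕ) (h : ∀ y, ‖μ y - ν y‖ ≤ c * Gint g y ^ n) (x : ℝ) :
    ‖Tmap K U g hKcont hUcont hg hg0 hbound μ x - Tmap K U g hKcont hUcont hg hg0 hbound ν x‖
      ≤ c / (n + 1) * Gint g x ^ (n + 1) := by
  rw [Tmap_apply, Tmap_apply, add_sub_add_left_eq_sub,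
    Vphi_sub hKcont hUcont hg hg0 hbound μ ν (max ‖μ‖ ‖ν‖) μ.continuous
      (fun y => (μ.norm_coe_le_norm y).trans (le_max_left _ _)) ν.continuous
      (fun y => (ν.norm_coe_le_norm y).trans (le_max_right _ _)) x]
  exact Vphi_pow_le hKcont hUcont hg hg0 hbound _ (‖μ‖ + ‖ν‖)
    (μ.continuous.sub ν.continuous)
    (fun y => (norm_sub_le _ _).trans (add_le_add (μ.norm_coe_le_norm y) (ν.norm_coe_le_norm y)))
    c n h x

include hKcont hUcont hg hg0 hbound in
theorem Tmap_exp (μ : BoundedContinuousFunction ℝ (Matrix (Fin 2) (Fin 2) ℂ))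
    (h : ∀ y, ‖μ y - 1‖ ≤ Real.exp (Gint g y) - 1) (x : ℝ) :
    ‖Tmap K U g hKcont hUcont hg hg0 hbound μ x - 1‖ ≤ Real.exp (Gint g x) - 1 := by
  rw [Tmap_apply, add_sub_cancel_left]
  have hμexp : ∀ y, ‖μ y‖ ≤ Real.exp (Gint g y) := by
    intro y
    calc ‖μ y‖ = ‖(μ y - 1) + 1‖ := by rw [sub_add_cancel]
      _ ≤ ‖μ y - 1‖ + ‖(1 : Matrix (Fin 2) (Fin 2) ℂ)‖ := norm_add_le _ _
      _ ≤ (Real.exp (Gint g y) - 1) + 1 := by rw [norm_one]; gcongr; exact h y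
      _ = Real.exp (Gint g y) := by ring
  have := Vphi_norm_le hKcont hUcont hg hg0 hbound μ ‖μ‖ μ.continuous μ.norm_coe_le_norm x
    (fun y => Real.exp (Gint g y)) hμexp
    ((Gexp_integrable hg hg0 ((volume : Measure ℝ).restrict (Set.Iic x)) Measure.restrict_le_self))
  rw [Gexp_eq hg hg0 x] at this
  exact this
end Op

/-- Volterra integral equation `μ(x) = I + ∫_{-∞}^x K(x,y) U(y) μ(y) dy` with
`‖K(x,y)U(y)‖ ≤ g(y)`, `g ∈ L¹` nonnegative: a unique bounded continuous
solution exists and satisfies `‖μ(x) - I‖ ≤ exp(∫_{-∞}^x g) - 1`. -/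
theorem stmt_18 (K : ℝ → ℝ → Matrix (Fin 2) (Fin 2) ℂ)
    (U : ℝ → Matrix (Fin 2) (Fin 2) ℂ) (g : ℝ → ℝ)
    (hKcont : Continuous fun p : ℝ × ℝ => K p.1 p.2) (hUcont : Continuous U)
    (hg : Integrable g) (hg0 : ∀ y, 0 ≤ g y)
    (hbound : ∀ x y : ℝ, y ≤ x → ‖K x y * U y‖ ≤ g y) :
    ∃ μ : ℝ → Matrix (Fin 2) (Fin 2) ℂ,
      (Continuous μ ∧ (∃ B : ℝ, ∀ x, ‖μ x‖ ≤ B) ∧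
        (∀ x : ℝ, μ x = 1 + ∫ y in Set.Iic x, K x y * U y * μ y) ∧
        ∀ x : ℝ, ‖μ x - 1‖ ≤ Real.exp (∫ y in Set.Iic x, g y) - 1) ∧
      ∀ μ' : ℝ → Matrix (Fin 2) (Fin 2) ℂ,
        (Continuous μ' ∧ (∃ B : ℝ, ∀ x, ‖μ' x‖ ≤ B) ∧
          ∀ x : ℝ, μ' x = 1 + ∫ y in Set.Iic x, K x y * U y * μ' y) → μ' = μ := by
  classical
  set D := BoundedContinuousFunction ℝ (Matrix (Fin 2) (Fin 2) ℂ)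
  set T : D → D := Tmap K U g hKcont hUcont hg hg0 hbound with hT
  set G := Gint g with hG
  set Gtop := ∫ y, g y with hGtop
  have hGtop0 : 0 ≤ Gtop := integral_nonneg hg0
  -- pointwise iterate bound
  have hdiff : ∀ (m : ℕ) (μ ν : D) (x : ℝ),
      ‖(T^[m] μ) x - (T^[m] ν) x‖ ≤ dist μ ν / m.factorial * G x ^ m := by
    intro m
    induction m with
    | zero =>
      intro μ ν x
      simp only [Function.iterate_zero, id_eq, Nat.factorial_zero, Nat.cast_one, div_one,
        pow_zero, mul_one]
      rw [← BoundedContinuousFunction.sub_apply, dist_eq_norm]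
      exact BoundedContinuousFunction.norm_coe_le_norm _ x
    | succ m ih =>
      intro μ ν x
      rw [Function.iterate_succ_apply', Function.iterate_succ_apply']
      have h := Tmap_diff hKcont hUcont hg hg0 hbound (T^[m] μ) (T^[m] ν)
        (dist μ ν / m.factorial) m (fun y => ih μ ν y) x
      refine h.trans (le_of_eq ?_)
      rw [Nat.factorial_succ]
      push_cast
      rw [div_div]
      ring_nf
      rfl
  -- norm iterate bound on D
  have hlip : ∀ (m : ℕ) (μ ν : D),
      dist (T^[m] μ) (T^[m] ν) ≤ Gtop ^ m / m.factorial * dist μ ν := by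
    intro m μ ν
    have hC : 0 ≤ Gtop ^ m / m.factorial * dist μ ν := by positivity
    rw [BoundedContinuousFunction.dist_le hC]
    intro x
    rw [dist_eq_norm]
    refine (hdiff m μ ν x).trans ?_
    have h1 : G x ^ m ≤ Gtop ^ m :=
      pow_le_pow_left₀ (Gint_nonneg hg0 x) (Gint_le hg hg0 x) m
    have h2 : 0 ≤ dist μ ν / m.factorial := by positivity
    calc dist μ ν / m.factorial * G x ^ m ≤ dist μ ν / m.factorial * Gtop ^ m := by gcongr
      _ = Gtop ^ m / m.factorial * dist μ ν := by ring
  -- pick N with contraction constant < 1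
  obtain ⟨N, hN⟩ : ∃ N : ℕ, Gtop ^ N / N.factorial < 1 := by
    have := FloorSemiring.tendsto_pow_div_factorial_atTop (K := ℝ) Gtop
    have h1 := this.eventually_lt_const (by norm_num : (0:ℝ) < 1)
    exact h1.exists
  set cN : ℝ := Gtop ^ N / N.factorial with hcN
  have hcN0 : 0 ≤ cN := by positivity
  have hcontr : ContractingWith cN.toNNReal (T^[N]) := by
    constructor
    · rwa [← Real.coe_toNNReal cN hcN0] at hN
      
    · refine LipschitzWith.of_dist_le_mul fun μ ν => ?_
      rw [Real.coe_toNNReal cN hcN0]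
      exact hlip N μ ν
  have hne : Nonempty D := ⟨0⟩
  set z : D := hcontr.fixedPoint (T^[N]) with hz
  have hzfix : Function.IsFixedPt (T^[N]) z := hcontr.fixedPoint_isFixedPt
  -- T z is also a fixed point of T^[N]
  have hTz : T z = z := by
    have h1 : Function.IsFixedPt (T^[N]) (T z) := by
      rw [Function.IsFixedPt, ← Function.iterate_succ_apply T N z,
        Function.iterate_succ_apply' T N z, hzfix]
    have h2 := hcontr.fixedPoint_unique h1
    rw [h2, ← hz]
  -- uniqueness among fixed points of T
  have huniq : ∀ w : D, T w = w → w = z := by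
    intro w hw
    have h1 : Function.IsFixedPt (T^[N]) w := Function.IsFixedPt.iterate hw N
    exact hcontr.fixedPoint_unique h1
  -- exp bound via iteration from const 1
  set c1 : D := BoundedContinuousFunction.const ℝ (1 : Matrix (Fin 2) (Fin 2) ℂ) with hc1
  set P : D → Prop := fun μ => ∀ x, ‖μ x - 1‖ ≤ Real.exp (G x) - 1 with hP
  have hP1 : P c1 := by
    intro x
    have h1 : ‖c1 x - 1‖ = 0 := by
      show ‖(1 : Matrix (Fin 2) (Fin 2) ℂ) - 1‖ = 0
      simp
    rw [h1, hG]
    have := Real.one_le_exp (Gint_nonneg (g := g) hg0 x)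
    linarith
  have hPT : ∀ μ : D, P μ → P (T μ) := fun μ hμ =>
    Tmap_exp hKcont hUcont hg hg0 hbound μ hμ
  have hPiter : ∀ (k : ℕ) (μ : D), P μ → P (T^[k] μ) := by
    intro k
    induction k with
    | zero => intro μ h; simpa using h
    | succ k ih =>
      intro μ h
      rw [Function.iterate_succ_apply']
      exact hPT _ (ih μ h)
  have hPz : P z := by
    have htend := hcontr.tendsto_iterate_fixedPoint c1
    intro x
    have hev : Filter.Tendsto (fun k : ℕ => ((T^[N])^[k] c1) x) Filter.atTop (nhds (z x)) := by
      refine (tendsto_iff_dist_tendsto_zero).2 ?_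
      refine squeeze_zero (fun k => dist_nonneg)
        (fun k => BoundedContinuousFunction.dist_coe_le_dist x) ?_
      exact tendsto_iff_dist_tendsto_zero.1 htend
    have hnorm : Filter.Tendsto (fun k : ℕ => ‖((T^[N])^[k] c1) x - 1‖) Filter.atTop
        (nhds (‖z x - 1‖)) := ((continuous_norm.comp (continuous_id.sub continuous_const)).tendsto
          (z x)).comp hev
    refine le_of_tendsto hnorm ?_
    refine Filter.Eventually.of_forall fun k => ?_
    have : P ((T^[N])^[k] c1) := by
      induction k with
      | zero => simpa using hP1
      | succ k ihk =>
        rw [Function.iterate_succ_apply']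
        exact hPiter N _ ihk
    exact this x
  -- conclude
  refine ⟨⇑z, ⟨z.continuous, ⟨‖z‖, fun x => z.norm_coe_le_norm x⟩, ?_, ?_⟩, ?_⟩
  · intro x
    have := congrArg (fun w : D => w x) hTz
    rw [← this, Tmap_apply]
    rfl
  · intro x
    exact hPz x
  · rintro μ' ⟨hc', ⟨B', hB'⟩, heq'⟩
    set w : D := BoundedContinuousFunction.ofNormedAddCommGroup μ' hc' B' hB' with hw
    have hwz : w = z := by
      refine huniq w ?_
      apply BoundedContinuousFunction.ext
      intro x
      rw [Tmap_apply]
      have : Vphi K U (⇑w) x = Vphi K U μ' x := rfl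
      rw [this]
      exact (heq' x).symm
    funext x
    calc μ' x = w x := rfl
      _ = z x := by rw [hwz]
end
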